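/- arXiv:2101.04195 — 9 statements merged into one kernel-verified Lean document; each statement's English description precedes it below -/
import Mathlib

section
/- Let R be a commutative ring, let n be a natural number, and let A_0, A_1, …, A_n be elements of R. Define the two-variable polynomial Q(x,y) = Σ_{k=0}^{n} A_k · (Π_{i=0}^{k-1} (1 − A_i·x)) · (Π_{i=k+1}^{n} (1 − A_i·y)) in R[x,y]. Then Q is symmetric in x and y, i.e. Q(x,y) = Q(y,x) as polynomials (equivalently, swapping the two variables leaves Q unchanged). -/
open MvPolynomial

section
variable {R : Type*} [CommRing R] (A : ℕ → R)

noncomputable def Qp (n : ℕ) : MvPolynomial (Fin 2) R :=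
  ∑ k ∈ Finset.range (n + 1),
    C (A k) * (∏ i ∈ Finset.range k, (1 - C (A i) * X 0)) *
      (∏ i ∈ Finset.Icc (k + 1) n, (1 - C (A i) * X 1))

lemma Qp_succ (n : ℕ) :
    Qp A (n+1) = (1 - C (A (n+1)) * X 1) * Qp A n
      + C (A (n+1)) * ∏ i ∈ Finset.range (n+1), (1 - C (A i) * X 0) := by
  unfold Qp
  rw [Finset.sum_range_succ, Finset.mul_sum]
  congr 1
  · apply Finset.sum_congr rfl
    intro k hk
    have hk' := Finset.mem_range.mp hk
    have h : Finset.Icc (k+1) (n+1) = insert (n+1) (Finset.Icc (k+1) n) := by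
      ext x; simp [Finset.mem_Icc, Finset.mem_insert]; omega
    rw [h, Finset.prod_insert (by simp)]
    ring
  · rw [Finset.Icc_eq_empty (by omega), Finset.prod_empty]
    ring

lemma Qp_key (n : ℕ) :
    (X 0 - X 1) * Qp A n =
      (∏ i ∈ Finset.range (n+1), (1 - C (A i) * X 1))
      - ∏ i ∈ Finset.range (n+1), (1 - C (A i) * X 0) := by
  induction n with
  | zero => simp [Qp]; ring
  | succ n ih =>
    rw [Qp_succ, Finset.prod_range_succ (fun i => 1 - C (A i) * X 1) (n+1),
      Finset.prod_range_succ (fun i => 1 - C (A i) * X 0) (n+1)]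
    linear_combination (1 - C (A (n+1)) * X 1) * ih

lemma Qp_symm (n : ℕ) :
    rename (Equiv.swap (0:Fin 2) 1) (Qp A n) = Qp A n := by
  induction n with
  | zero => simp [Qp]
  | succ n ih =>
    rw [Qp_succ]
    simp only [map_add, map_mul, map_sub, map_one, rename_C, rename_X, map_prod, ih,
      Equiv.swap_apply_left, Equiv.swap_apply_right]
    linear_combination (-(C (A (n+1)))) * Qp_key A n

end

/-- The two-variable polynomial
`Q(x,y) = Σ_{k=0}^{n} A_k · (Π_{i=0}^{k-1} (1 − A_i·x)) · (Π_{i=k+1}^{n} (1 − A_i·y))`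
is symmetric in `x` and `y`. -/
theorem five_vertex_Q_symmetric {R : Type*} [CommRing R] (n : ℕ) (A : ℕ → R) :
    let Q : MvPolynomial (Fin 2) R :=
      ∑ k ∈ Finset.range (n + 1),
        C (A k) * (∏ i ∈ Finset.range k, (1 - C (A i) * X 0)) *
          (∏ i ∈ Finset.Icc (k + 1) n, (1 - C (A i) * X 1))
    rename (Equiv.swap (0 : Fin 2) 1) Q = Q := by
  intro Q
  exact Qp_symm A n
end

section
/- Let R be a commutative ring, let n be a natural number, and let A_0, A_1, …, A_n be elements of R. In the polynomial Q(x,y) = Σ_{k=0}^{n} A_k · (Π_{i=0}^{k-1} (1 − A_i·x)) · (Π_{i=k+1}^{n} (1 − A_i·y)) ∈ R[x,y], for all natural numbers p, q the coefficient of x^p y^q equals (−1)^{p+q} · e_{p+q+1}(A_0,…,A_n), where e_m denotes the m-th elementary symmetric polynomial evaluated at the n+1 values A_0,…,A_n (so e_m = 0 when m > n+1). -/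
open MvPolynomial

section FiveVertexAux

open Finset

private lemma fvQ_prod_one_sub_expand {R : Type*} [CommRing R] (A : ℕ → R) (s : Finset ℕ)
    (j : Fin 2) :
    ∏ i ∈ s, (1 - C (A i) * X j : MvPolynomial (Fin 2) R) =
    ∑ t ∈ s.powerset, monomial (Finsupp.single j t.card) ((-1 : R)^t.card * ∏ i ∈ t, A i) := by
  have h : ∀ i ∈ s, (1 - C (A i) * X j : MvPolynomial (Fin 2) R)
      = -1 * (C (A i) * X j) + 1 := by intro i _; ring
  rw [Finset.prod_congr rfl h, Finset.prod_add]
  refine Finset.sum_congr rfl fun t ht => ?_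
  rw [Finset.prod_const_one, mul_one, Finset.prod_mul_distrib, Finset.prod_const,
    Finset.prod_mul_distrib, Finset.prod_const, X_pow_eq_monomial]
  have h1 : (∏ _x ∈ t, (C (A _x) : MvPolynomial (Fin 2) R)) = C (∏ i ∈ t, A i) := by
    simp
  have h2 : ((-1 : MvPolynomial (Fin 2) R)) ^ t.card = C ((-1 : R) ^ t.card) := by simp
  rw [h1, h2, ← mul_assoc, ← C_mul, C_mul_monomial, mul_one]

private lemma fvQ_esum_insert {R : Type*} [CommRing R] (A : ℕ → R) {a : ℕ} {s : Finset ℕ}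
    (ha : a ∉ s) (m : ℕ) :
    ∑ t ∈ (insert a s).powersetCard (m+1), ∏ i ∈ t, A i
      = (∑ t ∈ s.powersetCard (m+1), ∏ i ∈ t, A i)
        + A a * ∑ t ∈ s.powersetCard m, ∏ i ∈ t, A i := by
  rw [Finset.powersetCard_succ_insert ha, Finset.sum_union, Finset.sum_image, Finset.mul_sum]
  · congr 1
    refine Finset.sum_congr rfl fun t ht => ?_
    have hat : a ∉ t := fun h => ha ((Finset.mem_powersetCard.1 ht).1 h)
    rw [Finset.prod_insert hat]
  · intro t ht t' ht' h
    have hat : a ∉ t := fun hh => ha ((Finset.mem_powersetCard.1 ht).1 hh)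
    have hat' : a ∉ t' := fun hh => ha ((Finset.mem_powersetCard.1 ht').1 hh)
    rw [← Finset.erase_insert hat, ← Finset.erase_insert hat', h]
  · rw [Finset.disjoint_left]
    intro t ht ht'
    obtain ⟨t', ht', rfl⟩ := Finset.mem_image.1 ht'
    exact ha ((Finset.mem_powersetCard.1 ht).1 (Finset.mem_insert_self a t'))

private lemma fvQ_key_sum {R : Type*} [CommRing R] (A : ℕ → R) :
    ∀ n q p : ℕ,
    ∑ k ∈ Finset.range (n+1), A k * (∑ t ∈ (Finset.range k).powersetCard p, ∏ i ∈ t, A i)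
      * (∑ t ∈ (Finset.Icc (k+1) n).powersetCard q, ∏ i ∈ t, A i)
    = ∑ S ∈ (Finset.range (n+1)).powersetCard (p+q+1), ∏ i ∈ S, A i := by
  intro n
  induction n with
  | zero =>
    intro q p
    simp only [zero_add, Nat.zero_add, Finset.range_one, Finset.sum_singleton,
      Finset.range_zero]
    have hIcc : Finset.Icc 1 0 = (∅ : Finset ℕ) := by simp
    rw [hIcc]
    cases p with
    | zero =>
      cases q with
      | zero =>
        rw [show (0+0+1 : ℕ) = ({0} : Finset ℕ).card by simp, Finset.powersetCard_self]
        simp only [Finset.powersetCard_zero, Finset.sum_singleton, Finset.prod_empty,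
          Finset.prod_singleton, mul_one]
      | succ q =>
        rw [Finset.powersetCard_eq_empty.2 (by simp : (∅ : Finset ℕ).card < q + 1),
          Finset.powersetCard_eq_empty.2 (by simp : ({0} : Finset ℕ).card < 0 + (q+1) + 1)]
        simp
    | succ p =>
      rw [Finset.powersetCard_eq_empty.2 (by simp : (∅ : Finset ℕ).card < p + 1),
        Finset.powersetCard_eq_empty.2 (by simp : ({0} : Finset ℕ).card < (p+1) + q + 1)]
      simp
  | succ n ih =>
    intro q p
    rw [Finset.sum_range_succ]
    have hIcc0 : Finset.Icc (n+1+1) (n+1) = (∅ : Finset ℕ) := by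
      rw [Finset.Icc_eq_empty]; omega
    rw [hIcc0]
    have hins : ∀ k ∈ Finset.range (n+1),
        A k * (∑ t ∈ (Finset.range k).powersetCard p, ∏ i ∈ t, A i)
          * (∑ t ∈ (Finset.Icc (k+1) (n+1)).powersetCard q, ∏ i ∈ t, A i)
        = A k * (∑ t ∈ (Finset.range k).powersetCard p, ∏ i ∈ t, A i)
          * (∑ t ∈ (insert (n+1) (Finset.Icc (k+1) n)).powersetCard q, ∏ i ∈ t, A i) := by
      intro k hk
      have hk' := Finset.mem_range.1 hk
      rw [Finset.insert_Icc_right_eq_Icc_add_one (by omega : k + 1 ≤ n + 1)]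
    rw [Finset.sum_congr rfl hins]
    have hrange : Finset.range (n+1+1) = insert (n+1) (Finset.range (n+1)) :=
      Finset.range_add_one
    have hnotmem : (n+1) ∉ Finset.range (n+1) := by simp
    cases q with
    | zero =>
      have h1 : ∀ (s : Finset ℕ), (∑ t ∈ s.powersetCard 0, ∏ i ∈ t, A i) = 1 := by
        intro s; simp
      simp only [h1, mul_one, Nat.add_zero]
      rw [hrange, fvQ_esum_insert A hnotmem p]
      have := ih 0 p
      simp only [h1, mul_one, Nat.add_zero] at this
      rw [this]
    | succ q' =>
      rw [Finset.powersetCard_eq_empty.2 (by simp : (∅ : Finset ℕ).card < q' + 1)]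
      simp only [Finset.sum_empty, mul_zero, add_zero]
      have hins2 : ∀ k ∈ Finset.range (n+1),
          A k * (∑ t ∈ (Finset.range k).powersetCard p, ∏ i ∈ t, A i)
            * (∑ t ∈ (insert (n+1) (Finset.Icc (k+1) n)).powersetCard (q'+1), ∏ i ∈ t, A i)
          = A k * (∑ t ∈ (Finset.range k).powersetCard p, ∏ i ∈ t, A i)
              * (∑ t ∈ (Finset.Icc (k+1) n).powersetCard (q'+1), ∏ i ∈ t, A i)
            + A (n+1) * (A k * (∑ t ∈ (Finset.range k).powersetCard p, ∏ i ∈ t, A i)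
              * (∑ t ∈ (Finset.Icc (k+1) n).powersetCard q', ∏ i ∈ t, A i)) := by
        intro k hk
        have hnm : (n+1) ∉ Finset.Icc (k+1) n := by simp only [Finset.mem_Icc]; omega
        rw [fvQ_esum_insert A hnm q']
        ring
      rw [Finset.sum_congr rfl hins2, Finset.sum_add_distrib, ← Finset.mul_sum,
        ih (q'+1) p, ih q' p, hrange]
      rw [show p + (q'+1) + 1 = (p + q' + 1) + 1 by omega, fvQ_esum_insert A hnotmem (p+q'+1)]

private lemma fvQ_single_add_single_eq_iff (a b p q : ℕ) :
    Finsupp.single (0:Fin 2) a + Finsupp.single (1:Fin 2) b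
      = Finsupp.single (0:Fin 2) p + Finsupp.single (1:Fin 2) q ↔ a = p ∧ b = q := by
  constructor
  · intro h
    have h0 := DFunLike.congr_fun h 0
    have h1 := DFunLike.congr_fun h 1
    simp [Finsupp.single_apply] at h0 h1
    exact ⟨h0, h1⟩
  · rintro ⟨rfl, rfl⟩; rfl

private lemma fvQ_coeff_term {R : Type*} [CommRing R] (A : ℕ → R) (k : ℕ) (s₁ s₂ : Finset ℕ)
    (p q : ℕ) :
    coeff (Finsupp.single (0:Fin 2) p + Finsupp.single (1:Fin 2) q)
      (C (A k) * (∏ i ∈ s₁, (1 - C (A i) * X 0)) * (∏ i ∈ s₂, (1 - C (A i) * X 1)))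
    = (-1:R)^(p+q) * (A k * (∑ t ∈ s₁.powersetCard p, ∏ i ∈ t, A i)
        * (∑ t ∈ s₂.powersetCard q, ∏ i ∈ t, A i)) := by
  rw [fvQ_prod_one_sub_expand A s₁ 0, fvQ_prod_one_sub_expand A s₂ 1,
    Finset.powersetCard_eq_filter, Finset.powersetCard_eq_filter,
    Finset.sum_filter, Finset.sum_filter]
  simp only [Finset.mul_sum, Finset.sum_mul, MvPolynomial.coeff_sum, C_mul_monomial,
    monomial_mul, coeff_monomial, fvQ_single_add_single_eq_iff]
  refine Finset.sum_congr rfl fun t₂ _ => Finset.sum_congr rfl fun t₁ _ => ?_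
  by_cases h1 : t₁.card = p <;> by_cases h2 : t₂.card = q <;>
    simp only [h1, h2, if_true, if_false, and_true, and_false, true_and, false_and,
      if_pos, mul_zero, zero_mul, ite_true, ite_false]
  subst h1; subst h2; ring

end FiveVertexAux

/-- In the polynomial
`Q(x,y) = Σ_{k=0}^{n} A_k · (Π_{i=0}^{k-1} (1 − A_i·x)) · (Π_{i=k+1}^{n} (1 − A_i·y))`,
the coefficient of `x^p y^q` equals `(−1)^{p+q} · e_{p+q+1}(A_0,…,A_n)`, where `e_m`
denotes the `m`-th elementary symmetric polynomial of the values `A_0, …, A_n`. -/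
theorem five_vertex_Q_coeff {R : Type*} [CommRing R] (n : ℕ) (A : ℕ → R) (p q : ℕ) :
    let Q : MvPolynomial (Fin 2) R :=
      ∑ k ∈ Finset.range (n + 1),
        C (A k) * (∏ i ∈ Finset.range k, (1 - C (A i) * X 0)) *
          (∏ i ∈ Finset.Icc (k + 1) n, (1 - C (A i) * X 1))
    MvPolynomial.coeff (Finsupp.single (0 : Fin 2) p + Finsupp.single (1 : Fin 2) q) Q =
      (-1 : R) ^ (p + q) *
        ∑ S ∈ (Finset.range (n + 1)).powersetCard (p + q + 1), ∏ i ∈ S, A i := by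
  intro Q
  show MvPolynomial.coeff (Finsupp.single (0 : Fin 2) p + Finsupp.single (1 : Fin 2) q)
      (∑ k ∈ Finset.range (n + 1),
        C (A k) * (∏ i ∈ Finset.range k, (1 - C (A i) * X 0)) *
          (∏ i ∈ Finset.Icc (k + 1) n, (1 - C (A i) * X 1))) = _
  rw [MvPolynomial.coeff_sum]
  have hterm : ∀ k ∈ Finset.range (n+1),
      MvPolynomial.coeff (Finsupp.single (0 : Fin 2) p + Finsupp.single (1 : Fin 2) q)
        (C (A k) * (∏ i ∈ Finset.range k, (1 - C (A i) * X 0)) *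
          (∏ i ∈ Finset.Icc (k + 1) n, (1 - C (A i) * X 1)))
      = (-1:R)^(p+q) * (A k * (∑ t ∈ (Finset.range k).powersetCard p, ∏ i ∈ t, A i)
          * (∑ t ∈ (Finset.Icc (k+1) n).powersetCard q, ∏ i ∈ t, A i)) := by
    intro k _
    exact fvQ_coeff_term A k (Finset.range k) (Finset.Icc (k+1) n) p q
  rw [Finset.sum_congr rfl hterm, ← Finset.mul_sum]
  congr 1
  have := fvQ_key_sum A n q p
  simp only [mul_assoc] at this ⊢
  exact this
end

section
/- Let a, b, c be real numbers with a > 0 and D := a·c − b² > 0. Let s', t' be nonzero complex numbers with Im(s'/t') < 0, and set X' = a·s' + b·t' and Y' = b·s' + c·t'. Then X'/t' + Y'/s' = 0 if and only if s'/t' = (−b − i·√D)/a; and when these equivalent conditions hold, one has X'/t' = −i·√D and Y'/s' = i·√D. -/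
open Complex

/-- Pointwise content of the characterization of intrinsic coordinates
(Proposition 2.1 of the paper). -/
theorem intrinsic_coordinate_characterization
    (a b c : ℝ) (ha : 0 < a) (hD : 0 < a * c - b ^ 2)
    (s' t' : ℂ) (hs' : s' ≠ 0) (ht' : t' ≠ 0) (him : (s' / t').im < 0)
    (X' Y' : ℂ) (hX' : X' = (a : ℂ) * s' + (b : ℂ) * t')
    (hY' : Y' = (b : ℂ) * s' + (c : ℂ) * t') :
    (X' / t' + Y' / s' = 0 ↔
      s' / t' = (-(b : ℂ) - Complex.I * Real.sqrt (a * c - b ^ 2)) / (a : ℂ)) ∧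
    (X' / t' + Y' / s' = 0 →
      X' / t' = -Complex.I * Real.sqrt (a * c - b ^ 2) ∧
      Y' / s' = Complex.I * Real.sqrt (a * c - b ^ 2)) := by
  set d : ℝ := Real.sqrt (a * c - b ^ 2) with hd
  have hdpos : 0 < d := Real.sqrt_pos.mpr hD
  have hd2 : (d : ℂ) ^ 2 = (a : ℂ) * c - (b : ℂ) ^ 2 := by
    have h2 : d ^ 2 = a * c - b ^ 2 := Real.sq_sqrt hD.le
    exact_mod_cast congrArg (Complex.ofReal ·) h2
  have ha' : (a : ℂ) ≠ 0 := by exact_mod_cast ha.ne'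
  set u : ℂ := s' / t' with hu
  have hune : u ≠ 0 := div_ne_zero hs' ht'
  have hsum : X' / t' + Y' / s' = ((a : ℂ) * u ^ 2 + 2 * b * u + c) / u := by
    rw [hX', hY', hu]
    field_simp
    ring
  set r₁ : ℂ := (-(b : ℂ) - Complex.I * d) / a with hr₁
  set r₂ : ℂ := (-(b : ℂ) + Complex.I * d) / a with hr₂
  have hfac : ∀ z : ℂ, (a : ℂ) * z ^ 2 + 2 * b * z + c = a * (z - r₁) * (z - r₂) := by
    intro z
    rw [hr₁, hr₂]
    field_simp
    ring_nf
    rw [Complex.I_sq]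
    ring_nf
    linear_combination -hd2
  have hquad : X' / t' + Y' / s' = 0 ↔ (u = r₁ ∨ u = r₂) := by
    rw [hsum, div_eq_zero_iff]
    simp only [hune, or_false]
    rw [hfac u, mul_eq_zero, mul_eq_zero, sub_eq_zero, sub_eq_zero]
    simp [ha']
  have hr₂im : 0 < r₂.im := by
    rw [hr₂]
    rw [Complex.div_ofReal_im]
    simp only [Complex.add_im, Complex.neg_im, Complex.ofReal_im, Complex.mul_im,
      Complex.I_re, Complex.I_im, Complex.ofReal_re, neg_zero]
    positivity
  have hune2 : u ≠ r₂ := by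
    intro h
    rw [h] at him
    exact absurd him (not_lt.mpr hr₂im.le)
  have hiff : X' / t' + Y' / s' = 0 ↔ u = r₁ := by
    rw [hquad]
    constructor
    · rintro (h | h)
      · exact h
      · exact absurd h hune2
    · exact fun h => Or.inl h
  refine ⟨hiff, fun h => ?_⟩
  have hu1 : u = r₁ := hiff.mp h
  have hXt : X' / t' = (a : ℂ) * u + b := by
    rw [hX', hu]; field_simp
  have h1 : X' / t' = -Complex.I * d := by
    rw [hXt, hu1, hr₁]
    field_simp
    ring
  refine ⟨h1, ?_⟩
  have : Y' / s' = -(X' / t') := by linear_combination h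
  rw [this, h1]; ring
end

section
/- Let r be a real number and let z, w be complex numbers, neither equal to 0 or 1, satisfying (1 − z)·(1 − w) = r²·z·w (equivalently, 1 − z − w + (1 − r²)·z·w = 0). Then (w/(1 − w))·((1 − z̄)/z̄) = r²·|w/(1 − w)|², where z̄ is the complex conjugate of z; in particular this cross-ratio is a nonnegative real number, so the four points 0, 1, w, z̄ lie on a common circle or line. -/
open Complex

/-- If `(1 − z)(1 − w) = r²zw` then `(w/(1 − w))·((1 − z̄)/z̄) = r²·|w/(1 − w)|²`;
in particular this cross-ratio is a nonnegative real number, so the four points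
`0, 1, w, z̄` lie on a common circle or line. -/
theorem cross_ratio_is_nonneg_real
    (r : ℝ) (z w : ℂ) (hz0 : z ≠ 0) (hz1 : z ≠ 1) (hw0 : w ≠ 0) (hw1 : w ≠ 1)
    (hcurve : (1 - z) * (1 - w) = (r : ℂ) ^ 2 * z * w) :
    (w / (1 - w)) * ((1 - (starRingEnd ℂ) z) / (starRingEnd ℂ) z) =
      (r : ℂ) ^ 2 * (‖w / (1 - w)‖ : ℂ) ^ 2 ∧
    ((w / (1 - w)) * ((1 - (starRingEnd ℂ) z) / (starRingEnd ℂ) z)).im = 0 ∧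
    0 ≤ ((w / (1 - w)) * ((1 - (starRingEnd ℂ) z) / (starRingEnd ℂ) z)).re := by
  have hw1' : (1 : ℂ) - w ≠ 0 := sub_ne_zero.mpr (Ne.symm hw1)
  have hz0' : (starRingEnd ℂ) z ≠ 0 := by
    simpa using hz0
  have key : (1 - z) / z = (r : ℂ) ^ 2 * (w / (1 - w)) := by
    field_simp
    linear_combination hcurve
  have key2 : (1 - (starRingEnd ℂ) z) / (starRingEnd ℂ) z
      = (r : ℂ) ^ 2 * ((starRingEnd ℂ) w / (1 - (starRingEnd ℂ) w)) := by
    have := congrArg (starRingEnd ℂ) key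
    simpa [map_div₀, map_sub, map_mul, map_pow, Complex.conj_ofReal] using this
  have habs : (w / (1 - w)) * ((starRingEnd ℂ) (w / (1 - w)))
      = ((‖w / (1 - w)‖ : ℝ) : ℂ) ^ 2 := by
    rw [Complex.mul_conj]; norm_cast; rw [Complex.sq_norm]
  have heq : (w / (1 - w)) * ((1 - (starRingEnd ℂ) z) / (starRingEnd ℂ) z) =
      (r : ℂ) ^ 2 * (‖w / (1 - w)‖ : ℂ) ^ 2 := by
    rw [key2, ← habs, map_div₀, map_sub, map_one]
    ring
  refine ⟨heq, ?_, ?_⟩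
  · rw [heq]
    simp only [← Complex.ofReal_pow, ← Complex.ofReal_mul]
    rw [Complex.ofReal_im]
  · rw [heq]
    simp only [← Complex.ofReal_pow, ← Complex.ofReal_mul]
    rw [Complex.ofReal_re]
    positivity
end

section
/- Let α, β be positive real numbers and let u be a complex number with Im u > 0. Then arg(u/(u + α²)) + arg(1 + β²·u) < arg u if α·β < 1; arg(u/(u + α²)) + arg(1 + β²·u) = arg u if α·β = 1; and arg(u/(u + α²)) + arg(1 + β²·u) > arg u if α·β > 1. -/
open Complex
open Real (pi)
local notation "π" => Real.pi

private lemma arg_mem_Ioo {z : ℂ} (hz : 0 < z.im) :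
    0 < Complex.arg z ∧ Complex.arg z < π := by
  constructor
  · rcases lt_or_eq_of_le (Complex.arg_nonneg_iff.mpr hz.le) with h | h
    · exact h
    · exfalso
      have := Complex.arg_eq_zero_iff.mp h.symm
      linarith [this.2, hz]
  · rcases lt_or_eq_of_le (Complex.arg_le_pi z) with h | h
    · exact h
    · exfalso
      have := Complex.arg_eq_pi_iff.mp h
      linarith [this.2, hz]

private lemma arg_div_upper {z w : ℂ} (hz : 0 < z.im) (hw : 0 < w.im) :
    Complex.arg (z / w) = Complex.arg z - Complex.arg w := by
  have hz0 : z ≠ 0 := fun h => by simp [h] at hz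
  have hw0 : w ≠ 0 := fun h => by simp [h] at hw
  obtain ⟨hz1, hz2⟩ := arg_mem_Ioo hz
  obtain ⟨hw1, hw2⟩ := arg_mem_Ioo hw
  have hinv : Complex.arg w⁻¹ = -Complex.arg w := by
    rw [Complex.arg_inv, if_neg (by intro h; exact absurd h hw2.ne)]
  rw [div_eq_mul_inv]
  have := (Complex.arg_mul_eq_add_arg_iff hz0 (inv_ne_zero hw0)).mpr
  rw [hinv] at this
  rw [this ⟨by linarith, by linarith⟩]
  ring

private lemma arg_add_strict {u : ℂ} (hu : 0 < u.im) {a b : ℝ} (hab : a < b) :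
    Complex.arg (u + (b : ℂ)) < Complex.arg (u + (a : ℂ)) := by
  set x := u.re
  set y := u.im
  have hima : (u + (a : ℂ)).im = y := by simp; rfl
  have himb : (u + (b : ℂ)).im = y := by simp; rfl
  have hrea : (u + (a : ℂ)).re = x + a := by simp; rfl
  have hreb : (u + (b : ℂ)).re = x + b := by simp; rfl
  have hza : 0 < (u + (a : ℂ)).im := by rw [hima]; exact hu
  have hzb : 0 < (u + (b : ℂ)).im := by rw [himb]; exact hu
  have ha0 : (u + (a : ℂ)) ≠ 0 := fun h => by simp [h] at hza
  have hb0 : (u + (b : ℂ)) ≠ 0 := fun h => by simp [h] at hzb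
  obtain ⟨ha1, ha2⟩ := arg_mem_Ioo hza
  obtain ⟨hb1, hb2⟩ := arg_mem_Ioo hzb
  have hA : 0 < ‖u + (a : ℂ)‖ := norm_pos_iff.mpr ha0
  have hB : 0 < ‖u + (b : ℂ)‖ := norm_pos_iff.mpr hb0
  set A := ‖u + (a : ℂ)‖ with hAdef
  set B := ‖u + (b : ℂ)‖ with hBdef
  have hA2 : A ^ 2 = (x + a) ^ 2 + y ^ 2 := by
    rw [hAdef, Complex.sq_norm, Complex.normSq_apply, hima, hrea]; ring
  have hB2 : B ^ 2 = (x + b) ^ 2 + y ^ 2 := by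
    rw [hBdef, Complex.sq_norm, Complex.normSq_apply, himb, hreb]; ring
  -- key inequality on cosines
  have key : (x + a) / A < (x + b) / B := by
    rw [div_lt_div_iff₀ hA hB]
    rcases le_or_gt 0 (x + a) with hp | hp
    · have hq : 0 < x + b := by linarith
      have h2 : 0 < (x + b) * A := mul_pos hq hA
      have hsq : ((x + a) * B) ^ 2 < ((x + b) * A) ^ 2 := by
        have e1 : ((x + a) * B) ^ 2 = (x+a)^2*(x+b)^2 + (x+a)^2*y^2 := by
          rw [mul_pow, hB2]; ring
        have e2 : ((x + b) * A) ^ 2 = (x+a)^2*(x+b)^2 + (x+b)^2*y^2 := by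
          rw [mul_pow, hA2]; ring
        have hpq : (x+a)^2 < (x+b)^2 := by nlinarith
        have hy : 0 < y^2 := by positivity
        have := mul_lt_mul_of_pos_right hpq hy
        rw [e1, e2]; linarith
      exact lt_of_pow_lt_pow_left₀ 2 h2.le hsq
    · rcases le_or_gt 0 (x + b) with hq | hq
      · have h1 : (x + a) * B < 0 := mul_neg_of_neg_of_pos hp hB
        have h2 : 0 ≤ (x + b) * A := mul_nonneg hq hA.le
        linarith
      · have h1 : 0 < -((x + a) * B) := by
          have := mul_neg_of_neg_of_pos hp hB; linarith
        have hsq : (-((x + b) * A)) ^ 2 < (-((x + a) * B)) ^ 2 := by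
          have e1 : (-((x + a) * B)) ^ 2 = (x+a)^2*(x+b)^2 + (x+a)^2*y^2 := by
            rw [neg_sq, mul_pow, hB2]; ring
          have e2 : (-((x + b) * A)) ^ 2 = (x+a)^2*(x+b)^2 + (x+b)^2*y^2 := by
            rw [neg_sq, mul_pow, hA2]; ring
          have hpq : (x+b)^2 < (x+a)^2 := by nlinarith
          have hy : 0 < y^2 := by positivity
          have := mul_lt_mul_of_pos_right hpq hy
          rw [e1, e2]; linarith
        have := lt_of_pow_lt_pow_left₀ 2 h1.le hsq
        linarith
  have hcosa : Real.cos (Complex.arg (u + (a : ℂ))) = (x + a) / A := by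
    rw [Complex.cos_arg ha0, hrea]
  have hcosb : Real.cos (Complex.arg (u + (b : ℂ))) = (x + b) / B := by
    rw [Complex.cos_arg hb0, hreb]
  have hmono := Real.strictAntiOn_cos.lt_iff_gt
    (Set.mem_Icc.mpr ⟨ha1.le, ha2.le⟩) (Set.mem_Icc.mpr ⟨hb1.le, hb2.le⟩)
  exact hmono.mp (by rw [hcosa, hcosb]; exact key)

/-- Trichotomy for `arg(u/(u + α²)) + arg(1 + β²u)` versus `arg u`, according to
whether `αβ < 1`, `αβ = 1`, or `αβ > 1`. -/
theorem arg_sum_trichotomy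
    (α β : ℝ) (hα : 0 < α) (hβ : 0 < β) (u : ℂ) (hu : 0 < u.im) :
    (α * β < 1 →
      Complex.arg (u / (u + (α : ℂ) ^ 2)) + Complex.arg (1 + (β : ℂ) ^ 2 * u) <
        Complex.arg u) ∧
    (α * β = 1 →
      Complex.arg (u / (u + (α : ℂ) ^ 2)) + Complex.arg (1 + (β : ℂ) ^ 2 * u) =
        Complex.arg u) ∧
    (1 < α * β →
      Complex.arg u <
        Complex.arg (u / (u + (α : ℂ) ^ 2)) + Complex.arg (1 + (β : ℂ) ^ 2 * u)) := by
  have hβ2 : (0:ℝ) < β ^ 2 := by positivity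
  have him : 0 < (u + ((α^2 : ℝ) : ℂ)).im := by
    rw [Complex.add_im, Complex.ofReal_im, add_zero]; exact hu
  -- rewrite first term
  have hcast : (α : ℂ) ^ 2 = ((α ^ 2 : ℝ) : ℂ) := by push_cast; ring
  have h1 : Complex.arg (u / (u + (α : ℂ) ^ 2)) =
      Complex.arg u - Complex.arg (u + ((α^2 : ℝ) : ℂ)) := by
    rw [hcast]
    exact arg_div_upper hu him
  -- rewrite second term
  have h2 : Complex.arg (1 + (β : ℂ) ^ 2 * u) =
      Complex.arg (u + ((1 / β^2 : ℝ) : ℂ)) := by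
    have hrw : (1 + (β : ℂ) ^ 2 * u) = ((β^2 : ℝ) : ℂ) * (u + ((1 / β^2 : ℝ) : ℂ)) := by
      have : (β:ℂ) ≠ 0 := by exact_mod_cast hβ.ne'
      push_cast
      field_simp
      ring
    rw [hrw, Complex.arg_real_mul _ hβ2]
  rw [h1, h2]
  refine ⟨fun h => ?_, fun h => ?_, fun h => ?_⟩
  · have hlt : α ^ 2 < 1 / β ^ 2 := by
      rw [lt_div_iff₀ hβ2]
      nlinarith [mul_pos hα hβ]
    have := arg_add_strict hu hlt
    linarith
  · have heq : α ^ 2 = 1 / β ^ 2 := by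
      field_simp
      nlinarith
    rw [heq]; ring
  · have hlt : 1 / β ^ 2 < α ^ 2 := by
      rw [div_lt_iff₀ hβ2]
      nlinarith [mul_pos hα hβ]
    have := arg_add_strict hu hlt
    linarith
end

section
/- Fix integers m₁, m₂ ≥ 1 and positive reals α₁,…,α_{m₁}, β₁,…,β_{m₂} with α_i·β_j < 1 for all i, j. Define, for u ∈ ℍ, s(u) = (1/(m₁·arg u))·Σ_{i=1}^{m₁} arg(u/(u + α_i²)) and t(u) = (1/(m₂·arg u))·Σ_{j=1}^{m₂} arg(1 + β_j²·u). Then for every u ∈ ℍ one has s(u) > 0, t(u) > 0 and s(u) + t(u) < 1; that is, (s(u), t(u)) lies in the interior of the triangle with vertices (0,0), (1,0), (0,1). -/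
open Complex

lemma argPosOfImPos {z : ℂ} (h : 0 < z.im) : 0 < arg z := by
  rcases (Complex.arg_nonneg_iff.2 h.le).lt_or_eq with h' | h'
  · exact h'
  · exact absurd (Complex.arg_eq_zero_iff.mp h'.symm).2 h.ne'

lemma argLtArgOfReLt {z w : ℂ} (him : z.im = w.im) (hz : 0 < z.im) (hre : z.re < w.re) :
    arg w < arg z := by
  have hw : 0 < w.im := him ▸ hz
  have hzne : z ≠ 0 := fun h => by simp [h] at hz
  have hwne : w ≠ 0 := fun h => by simp [h] at hw
  have hrz : 0 < ‖z‖ := norm_pos_iff.mpr hzne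
  have hrw : 0 < ‖w‖ := norm_pos_iff.mpr hwne
  have memz : z.re / ‖z‖ ∈ Set.Icc (-1 : ℝ) 1 := by
    have : |z.re / ‖z‖| ≤ 1 := by
      rw [abs_div, _root_.abs_of_nonneg (norm_nonneg z)]
      exact div_le_one_of_le₀ (Complex.abs_re_le_norm z) (norm_nonneg z)
    exact abs_le.mp this
  have memw : w.re / ‖w‖ ∈ Set.Icc (-1 : ℝ) 1 := by
    have : |w.re / ‖w‖| ≤ 1 := by
      rw [abs_div, _root_.abs_of_nonneg (norm_nonneg w)]
      exact div_le_one_of_le₀ (Complex.abs_re_le_norm w) (norm_nonneg w)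
    exact abs_le.mp this
  have hrz2 : (‖z‖)^2 = z.re^2 + z.im^2 := by
    rw [Complex.sq_norm, Complex.normSq_apply]; ring
  have hrw2 : (‖w‖)^2 = w.re^2 + z.im^2 := by
    rw [Complex.sq_norm, Complex.normSq_apply, ← him]; ring
  have key : z.re / ‖z‖ < w.re / ‖w‖ := by
    rw [div_lt_div_iff₀ hrz hrw]
    set x := z.re; set X := w.re; set rz := ‖z‖; set rw' := ‖w‖
    have hy2 : (0:ℝ) < z.im^2 := by positivity
    rcases le_or_gt X 0 with hX | hX
    · have hx : x < 0 := lt_of_lt_of_le hre hX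
      have hxx : X^2 < x^2 := by nlinarith
      have h2 : (X*rz)^2 < (x*rw')^2 := by nlinarith [mul_lt_mul_of_pos_right hxx hy2]
      have h3 : x*rw' < 0 := mul_neg_of_neg_of_pos hx hrw
      have h4 : X*rz ≤ 0 := mul_nonpos_of_nonpos_of_nonneg hX hrz.le
      nlinarith [h2, h3, h4]
    · rcases le_or_gt x 0 with hx | hx
      · exact lt_of_le_of_lt (mul_nonpos_of_nonpos_of_nonneg hx hrw.le) (mul_pos hX hrz)
      · have hxx : x^2 < X^2 := by nlinarith
        have h2 : (x*rw')^2 < (X*rz)^2 := by nlinarith [mul_lt_mul_of_pos_right hxx hy2]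
        nlinarith [h2, mul_pos hx hrw, mul_pos hX hrz]
  rw [Complex.arg_of_im_pos hz, Complex.arg_of_im_pos hw]
  exact Real.strictAntiOn_arccos memz memw key

lemma argDivImPos {z w : ℂ} (hz : 0 < z.im) (hw : 0 < w.im) :
    arg (z / w) = arg z - arg w := by
  have hzne : z ≠ 0 := fun h => by simp [h] at hz
  have hwne : w ≠ 0 := fun h => by simp [h] at hw
  have h := Complex.arg_div_coe_angle hzne hwne
  rw [← Real.Angle.coe_sub] at h
  rw [Complex.arg_coe_angle_eq_iff_eq_toReal.mp h,
    Real.Angle.toReal_coe_eq_self_iff_mem_Ioc]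
  constructor
  · have := argPosOfImPos hz
    have := Complex.arg_le_pi w
    linarith
  · have := argPosOfImPos hw
    have := Complex.arg_le_pi z
    linarith

/-- Small-`r` case: the slope `(s(u), t(u))` lies in the interior of the slope
triangle with vertices `(0,0)`, `(1,0)`, `(0,1)`. -/
theorem slopes_in_triangle_small_r
    (m₁ m₂ : ℕ) (hm₁ : 1 ≤ m₁) (hm₂ : 1 ≤ m₂)
    (α : Fin m₁ → ℝ) (β : Fin m₂ → ℝ)
    (hα : ∀ i, 0 < α i) (hβ : ∀ j, 0 < β j)
    (hr : ∀ i j, α i * β j < 1)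
    (u : ℂ) (hu : 0 < u.im) :
    let s : ℝ := (1 / (m₁ * Complex.arg u)) *
      ∑ i, Complex.arg (u / (u + ((α i : ℂ)) ^ 2))
    let t : ℝ := (1 / (m₂ * Complex.arg u)) *
      ∑ j, Complex.arg (1 + ((β j : ℂ)) ^ 2 * u)
    0 < s ∧ 0 < t ∧ s + t < 1 := by
  intro s t
  have hθ : 0 < Complex.arg u := argPosOfImPos hu
  have hm₁' : (0:ℝ) < m₁ := by exact_mod_cast Nat.lt_of_lt_of_le Nat.zero_lt_one hm₁
  have hm₂' : (0:ℝ) < m₂ := by exact_mod_cast Nat.lt_of_lt_of_le Nat.zero_lt_one hm₂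
  -- the shifted points
  have hca : ∀ i, ((α i : ℂ))^2 = (((α i)^2 : ℝ) : ℂ) := fun i => by push_cast; ring
  have himA : ∀ i, (u + ((α i : ℂ))^2).im = u.im := fun i => by
    simp [← Complex.ofReal_pow]
  have hreA : ∀ i, u.re < (u + ((α i : ℂ))^2).re := fun i => by
    have h2 : (0:ℝ) < (α i)^2 := pow_pos (hα i) 2
    simp only [← Complex.ofReal_pow, Complex.add_re, Complex.ofReal_re]
    linarith
  have hAeq : ∀ i, Complex.arg (u / (u + ((α i : ℂ))^2))
      = Complex.arg u - Complex.arg (u + ((α i : ℂ))^2) := fun i =>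
    argDivImPos hu (by rw [himA i]; exact hu)
  have hAlt : ∀ i, Complex.arg (u + ((α i : ℂ))^2) < Complex.arg u := fun i =>
    argLtArgOfReLt (himA i).symm hu (hreA i)
  have hApos : ∀ i, 0 < Complex.arg (u / (u + ((α i : ℂ))^2)) := fun i => by
    rw [hAeq i]; linarith [hAlt i]
  -- the B points
  have hβne : ∀ j, ((β j)^2 : ℝ) ≠ 0 := fun j => pow_ne_zero 2 (hβ j).ne'
  have hBrw : ∀ j, (1 + ((β j : ℂ))^2 * u)
      = (((β j)^2 : ℝ) : ℂ) * (u + ((((β j)^2)⁻¹ : ℝ) : ℂ)) := fun j => by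
    rw [mul_add, ← Complex.ofReal_mul, mul_inv_cancel₀ (hβne j)]
    push_cast
    ring
  have hBeq : ∀ j, Complex.arg (1 + ((β j : ℂ))^2 * u)
      = Complex.arg (u + ((((β j)^2)⁻¹ : ℝ) : ℂ)) := fun j => by
    rw [hBrw j]
    exact Complex.arg_real_mul _ (pow_pos (hβ j) 2)
  have himB : ∀ j, (u + ((((β j)^2)⁻¹ : ℝ) : ℂ)).im = u.im := fun j => by
    simp only [Complex.add_im, Complex.ofReal_im, add_zero]
  have hBpos : ∀ j, 0 < Complex.arg (1 + ((β j : ℂ))^2 * u) := fun j => by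
    rw [hBeq j]
    exact argPosOfImPos (by rw [himB j]; exact hu)
  -- pairwise inequality
  have hpair : ∀ i j, Complex.arg (u / (u + ((α i : ℂ))^2))
      + Complex.arg (1 + ((β j : ℂ))^2 * u) < Complex.arg u := by
    intro i j
    rw [hAeq i, hBeq j]
    have hac : (α i)^2 < ((β j)^2)⁻¹ := by
      have h1 : (β j)^2 * ((β j)^2)⁻¹ = 1 := mul_inv_cancel₀ (hβne j)
      nlinarith [hr i j, mul_pos (hα i) (hβ j), sq_nonneg (β j), hβ j, hα i]
    have : Complex.arg (u + ((((β j)^2)⁻¹ : ℝ) : ℂ))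
        < Complex.arg (u + ((α i : ℂ))^2) := by
      apply argLtArgOfReLt
      · rw [himA i, himB j]
      · rw [himA i]; exact hu
      · simp only [← Complex.ofReal_pow, Complex.add_re, Complex.ofReal_re]
        linarith [hac]
    linarith
  -- nonempty index sets
  have hne₁ : (Finset.univ : Finset (Fin m₁)).Nonempty :=
    ⟨⟨0, by omega⟩, Finset.mem_univ _⟩
  have hne₂ : (Finset.univ : Finset (Fin m₂)).Nonempty :=
    ⟨⟨0, by omega⟩, Finset.mem_univ _⟩
  set S : ℝ := ∑ i, Complex.arg (u / (u + ((α i : ℂ)) ^ 2)) with hSdef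
  set T : ℝ := ∑ j, Complex.arg (1 + ((β j : ℂ)) ^ 2 * u) with hTdef
  have hS : 0 < S := Finset.sum_pos (fun i _ => hApos i) hne₁
  have hT : 0 < T := Finset.sum_pos (fun j _ => hBpos j) hne₂
  -- double sum inequality
  have hsum : (m₂ : ℝ) * S + (m₁ : ℝ) * T < (m₁ : ℝ) * ((m₂ : ℝ) * Complex.arg u) := by
    have h1 : ∑ i, ∑ j, (Complex.arg (u / (u + ((α i : ℂ)) ^ 2))
        + Complex.arg (1 + ((β j : ℂ)) ^ 2 * u))
        < ∑ _i : Fin m₁, ((m₂ : ℝ) * Complex.arg u) := by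
      apply Finset.sum_lt_sum_of_nonempty hne₁
      intro i _
      have : ∑ j, (Complex.arg (u / (u + ((α i : ℂ)) ^ 2))
          + Complex.arg (1 + ((β j : ℂ)) ^ 2 * u))
          < ∑ _j : Fin m₂, Complex.arg u :=
        Finset.sum_lt_sum_of_nonempty hne₂ (fun j _ => hpair i j)
      simpa [Finset.sum_const, Finset.card_univ, nsmul_eq_mul] using this
    have hLHS : ∑ i, ∑ j, (Complex.arg (u / (u + ((α i : ℂ)) ^ 2))
        + Complex.arg (1 + ((β j : ℂ)) ^ 2 * u))
        = (m₂ : ℝ) * S + (m₁ : ℝ) * T := by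
      calc ∑ i, ∑ j, (Complex.arg (u / (u + ((α i : ℂ)) ^ 2))
            + Complex.arg (1 + ((β j : ℂ)) ^ 2 * u))
          = ∑ i, ((m₂ : ℝ) * Complex.arg (u / (u + ((α i : ℂ)) ^ 2)) + T) := by
            refine Finset.sum_congr rfl fun i _ => ?_
            rw [Finset.sum_add_distrib, Finset.sum_const, Finset.card_univ,
              Fintype.card_fin, nsmul_eq_mul]
        _ = (m₂ : ℝ) * S + (m₁ : ℝ) * T := by
            rw [Finset.sum_add_distrib, ← Finset.mul_sum, Finset.sum_const,
              Finset.card_univ, Fintype.card_fin, nsmul_eq_mul]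
    rw [hLHS] at h1
    simpa [Finset.sum_const, Finset.card_univ, nsmul_eq_mul] using h1
  refine ⟨?_, ?_, ?_⟩
  · show 0 < (1 / ((m₁ : ℝ) * Complex.arg u)) * S
    positivity
  · show 0 < (1 / ((m₂ : ℝ) * Complex.arg u)) * T
    positivity
  · show (1 / ((m₁ : ℝ) * Complex.arg u)) * S
      + (1 / ((m₂ : ℝ) * Complex.arg u)) * T < 1
    have e1 : (1 / ((m₁ : ℝ) * Complex.arg u)) * S
        = ((m₂ : ℝ) * S) / ((m₁ : ℝ) * (m₂ : ℝ) * Complex.arg u) := by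
      field_simp
    have e2 : (1 / ((m₂ : ℝ) * Complex.arg u)) * T
        = ((m₁ : ℝ) * T) / ((m₁ : ℝ) * (m₂ : ℝ) * Complex.arg u) := by
      field_simp
    rw [e1, e2, ← add_div, div_lt_one (by positivity)]
    linarith [hsum]
end

section
/- Fix integers m₁, m₂ ≥ 1 and positive reals α₁,…,α_{m₁}, β₁,…,β_{m₂}, and define for u ∈ ℍ the small-r slope functions s(u) = (1/(m₁·arg u))·Σ_{i=1}^{m₁} arg(u/(u + α_i²)) and t(u) = (1/(m₂·arg u))·Σ_{j=1}^{m₂} arg(1 + β_j²·u). Then for every fixed R > 0, lim_{θ→0+} s(R·e^{iθ}) = (1/m₁)·Σ_{i=1}^{m₁} α_i²/(R + α_i²) and lim_{θ→0+} t(R·e^{iθ}) = (1/m₂)·Σ_{j=1}^{m₂} β_j²·R/(1 + β_j²·R). -/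
open Complex Filter

/-- If `w : ℝ → ℂ` has derivative `L * r * I` at `0` with `w 0 = r > 0` real, then
`arg (w θ) / θ → L` as `θ → 0⁺`. -/
lemma arg_slope_tendsto (w : ℝ → ℂ) (r L : ℝ) (hr : 0 < r)
    (h0 : w 0 = (r : ℂ)) (hw : HasDerivAt w ((L : ℂ) * r * I) 0) :
    Tendsto (fun θ : ℝ => Complex.arg (w θ) / θ) (nhdsWithin 0 (Set.Ioi 0)) (nhds L) := by
  have hmem : w 0 ∈ Complex.slitPlane := by
    rw [h0]; exact Complex.ofReal_mem_slitPlane.2 hr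
  have hlog : HasDerivAt (fun θ : ℝ => Complex.log (w θ)) ((L : ℂ) * r * I / w 0) 0 :=
    hw.clog_real hmem
  have him : HasDerivAt (fun θ : ℝ => (Complex.log (w θ)).im)
      (((L : ℂ) * r * I / w 0).im) 0 :=
    (Complex.imCLM.hasFDerivAt.comp_hasDerivAt 0 hlog)
  have hval : ((L : ℂ) * r * I / w 0).im = L := by
    rw [h0]
    have hr' : (r : ℂ) ≠ 0 := by exact_mod_cast hr.ne'
    have : (L : ℂ) * r * I / (r : ℂ) = (L : ℂ) * I := by field_simp
    rw [this]
    simp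
  rw [hval] at him
  have hslope := hasDerivAt_iff_tendsto_slope.1 him
  have h00 : (Complex.log (w 0)).im = 0 := by
    rw [Complex.log_im, h0, Complex.arg_ofReal_of_nonneg hr.le]
  refine Tendsto.congr ?_ (hslope.mono_left (nhdsWithin_mono _ ?_))
  · intro θ
    rw [slope_def_field, h00, Complex.log_im, sub_zero, sub_zero]
  · intro x hx
    exact ne_of_gt hx

lemma hasDerivAt_R_exp (R : ℝ) :
    HasDerivAt (fun θ : ℝ => (R : ℂ) * Complex.exp (θ * I)) ((R : ℂ) * I) 0 := by
  have h1 : HasDerivAt (fun θ : ℝ => (θ : ℂ) * I) I 0 := by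
    simpa using (Complex.ofRealCLM.hasDerivAt (x := (0 : ℝ))).mul_const I
  have h2 := h1.cexp
  simpa using h2.const_mul (R : ℂ)

/-- Coexistence boundary limits: as `θ → 0⁺`, the small-`r` slopes at `u = R·e^{iθ}`
tend to `(1/m₁)·Σᵢ αᵢ²/(R + αᵢ²)` and `(1/m₂)·Σⱼ βⱼ²·R/(1 + βⱼ²·R)`. -/
theorem coexistence_boundary_limits
    (m₁ m₂ : ℕ) (hm₁ : 1 ≤ m₁) (hm₂ : 1 ≤ m₂)
    (α : Fin m₁ → ℝ) (β : Fin m₂ → ℝ)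
    (hα : ∀ i, 0 < α i) (hβ : ∀ j, 0 < β j)
    (R : ℝ) (hR : 0 < R) :
    let s : ℂ → ℝ := fun u => (1 / (m₁ * Complex.arg u)) *
      ∑ i, Complex.arg (u / (u + ((α i : ℂ)) ^ 2))
    let t : ℂ → ℝ := fun u => (1 / (m₂ * Complex.arg u)) *
      ∑ j, Complex.arg (1 + ((β j : ℂ)) ^ 2 * u)
    Tendsto (fun θ : ℝ => s ((R : ℂ) * Complex.exp (θ * Complex.I)))
        (nhdsWithin 0 (Set.Ioi 0))
        (nhds ((1 / m₁) * ∑ i, (α i) ^ 2 / (R + (α i) ^ 2))) ∧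
    Tendsto (fun θ : ℝ => t ((R : ℂ) * Complex.exp (θ * Complex.I)))
        (nhdsWithin 0 (Set.Ioi 0))
        (nhds ((1 / m₂) * ∑ j, (β j) ^ 2 * R / (1 + (β j) ^ 2 * R))) := by
  intro s t
  have hu := hasDerivAt_R_exp R
  have hmemIoo : Set.Ioo (0:ℝ) Real.pi ∈ nhdsWithin (0:ℝ) (Set.Ioi 0) :=
    Ioo_mem_nhdsGT_of_mem ⟨le_refl 0, Real.pi_pos⟩
  have hargθ : ∀ θ ∈ Set.Ioo (0:ℝ) Real.pi,
      Complex.arg ((R : ℂ) * Complex.exp (θ * I)) = θ := by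
    intro θ hθ
    rw [Complex.arg_real_mul _ hR, Complex.exp_mul_I]
    exact Complex.arg_cos_add_sin_mul_I ⟨by linarith [hθ.1, Real.pi_pos], hθ.2.le⟩
  constructor
  · have key : ∀ i : Fin m₁, Tendsto
        (fun θ : ℝ => Complex.arg ((R : ℂ) * Complex.exp (θ * I) /
          ((R : ℂ) * Complex.exp (θ * I) + ((α i : ℂ)) ^ 2)) / θ)
        (nhdsWithin 0 (Set.Ioi 0)) (nhds ((α i) ^ 2 / (R + (α i) ^ 2))) := by
      intro i
      have hc : (0:ℝ) < (α i) ^ 2 := pow_pos (hα i) 2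
      have hRc : (0:ℝ) < R + (α i) ^ 2 := by positivity
      have hRc' : ((R : ℂ) + ((α i : ℂ)) ^ 2) ≠ 0 := by
        have : ((R : ℂ) + ((α i : ℂ)) ^ 2) = ((R + (α i) ^ 2 : ℝ) : ℂ) := by push_cast; ring
        rw [this]; exact_mod_cast hRc.ne'
      apply arg_slope_tendsto _ (R / (R + (α i) ^ 2)) _ (by positivity)
      · push_cast
        simp
      · have hden : HasDerivAt
            (fun θ : ℝ => (R : ℂ) * Complex.exp (θ * I) + ((α i : ℂ)) ^ 2)
            ((R : ℂ) * I) 0 := hu.add_const _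
        have hne : (R : ℂ) * Complex.exp ((0:ℝ) * I) + ((α i : ℂ)) ^ 2 ≠ 0 := by
          simpa using hRc'
        have hw := hu.div hden hne
        refine hw.congr_deriv (Eq.symm ?_)
        simp only [Complex.ofReal_zero, zero_mul, Complex.exp_zero, mul_one]
        push_cast
        field_simp
        ring
    have hsum : Tendsto
        (fun θ : ℝ => (1 / (m₁:ℝ)) * ∑ i, Complex.arg ((R : ℂ) * Complex.exp (θ * I) /
          ((R : ℂ) * Complex.exp (θ * I) + ((α i : ℂ)) ^ 2)) / θ)
        (nhdsWithin 0 (Set.Ioi 0)) (nhds ((1 / m₁) * ∑ i, (α i) ^ 2 / (R + (α i) ^ 2))) :=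
      (tendsto_finset_sum _ (fun i _ => key i)).const_mul _
    refine hsum.congr' ?_
    filter_upwards [hmemIoo] with θ hθ
    simp only [s]
    rw [hargθ θ hθ, ← Finset.sum_div]
    have hθ0 : θ ≠ 0 := hθ.1.ne'
    have hm : (m₁ : ℝ) ≠ 0 := Nat.cast_ne_zero.2 (by omega)
    field_simp

  · have key : ∀ j : Fin m₂, Tendsto
        (fun θ : ℝ => Complex.arg (1 + ((β j : ℂ)) ^ 2 * ((R : ℂ) * Complex.exp (θ * I))) / θ)
        (nhdsWithin 0 (Set.Ioi 0)) (nhds ((β j) ^ 2 * R / (1 + (β j) ^ 2 * R))) := by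
      intro j
      have hc : (0:ℝ) < (β j) ^ 2 := pow_pos (hβ j) 2
      have hcR : (0:ℝ) < 1 + (β j) ^ 2 * R := by positivity
      apply arg_slope_tendsto _ (1 + (β j) ^ 2 * R) _ (by positivity)
      · push_cast
        simp
      · have hw := (hu.const_mul (((β j : ℂ)) ^ 2)).const_add 1
        refine hw.congr_deriv (Eq.symm ?_)
        push_cast
        have h1 : ((1:ℂ) + ((β j : ℂ)) ^ 2 * R) ≠ 0 := by
          have : ((1:ℂ) + ((β j : ℂ)) ^ 2 * R) = ((1 + (β j) ^ 2 * R : ℝ) : ℂ) := by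
            push_cast; ring
          rw [this]; exact_mod_cast hcR.ne'
        field_simp
    have hsum : Tendsto
        (fun θ : ℝ => (1 / (m₂:ℝ)) * ∑ j, Complex.arg (1 + ((β j : ℂ)) ^ 2 *
          ((R : ℂ) * Complex.exp (θ * I))) / θ)
        (nhdsWithin 0 (Set.Ioi 0)) (nhds ((1 / m₂) * ∑ j, (β j) ^ 2 * R / (1 + (β j) ^ 2 * R))) :=
      (tendsto_finset_sum _ (fun j _ => key j)).const_mul _
    refine hsum.congr' ?_
    filter_upwards [hmemIoo] with θ hθ
    simp only [t]
    rw [hargθ θ hθ, ← Finset.sum_div]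
    have hθ0 : θ ≠ 0 := hθ.1.ne'
    have hm : (m₂ : ℝ) ≠ 0 := Nat.cast_ne_zero.2 (by omega)
    field_simp
    congr 1; ext x; congr 1; ring
end

section
/- Define s : ℍ → ℝ by s(w) = arg(w)/arg(w/(1 − w)). Then for every w ∈ ℍ, s is real-differentiable at w and its Wirtinger derivative satisfies s_w = −(1/(4θ²))·( −Log(1 − w)/w + Log(1 − w̄)/w − Log(w)/(1 − w) + Log(w̄)/(1 − w) ), where θ = arg(w/(1 − w)), w̄ is the complex conjugate of w, and Log denotes the principal branch of the complex logarithm. -/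
open Complex

/-- The Wirtinger derivative `f_w = ½(∂f/∂x − i·∂f/∂y)` of a function `f : ℂ → ℂ`
(with respect to the real structure) at a point `w`. -/
noncomputable def wirtingerDeriv (f : ℂ → ℂ) (w : ℂ) : ℂ :=
  (fderiv ℝ f w 1 - Complex.I * fderiv ℝ f w Complex.I) / 2

lemma hasFDerivAt_arg_comp {f : ℂ → ℂ} {f' : ℂ} {x : ℂ} (hf : HasDerivAt f f' x)
    (hx : f x ∈ Complex.slitPlane) (c : ℂ) (hc : (f x)⁻¹ * f' = c) :
    HasFDerivAt (fun v => Complex.arg (f v))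
      (Complex.imCLM.comp (((1 : ℂ →L[ℂ] ℂ).smulRight c).restrictScalars ℝ)) x := by
  have hlog : HasDerivAt (fun v => Complex.log (f v)) ((f x)⁻¹ * f') x :=
    (Complex.hasDerivAt_log hx).comp x hf
  rw [hc] at hlog
  have h2 : HasFDerivAt (fun v => Complex.log (f v))
      (((1 : ℂ →L[ℂ] ℂ).smulRight c).restrictScalars ℝ) x :=
    hlog.hasFDerivAt.restrictScalars ℝ
  have h3 := Complex.imCLM.hasFDerivAt.comp x h2
  simpa [Function.comp_def, Complex.log_im] using h3

lemma key_im (z : ℂ) : ((z.im : ℂ) - Complex.I * (((Complex.I * z).im : ℝ) : ℂ)) = -Complex.I * z := by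
  apply Complex.ext <;> simp

lemma slope_algebra (w t a L1 L2 : ℂ) (hw : w ≠ 0) (h1 : 1 - w ≠ 0) (ht : t ≠ 0) :
    (-I * (a * (w*(1-w))⁻¹ * -(t^2)⁻¹ + t⁻¹ * w⁻¹))/2 =
    -(1/(4*t^2)) * (-L2/w + (L2 - 2*(a-t)*I)/w - L1/(1-w) + (L1 - 2*a*I)/(1-w)) := by
  have h2t : (2*t^2*w*(1-w)) ≠ 0 :=
    mul_ne_zero (mul_ne_zero (mul_ne_zero two_ne_zero (pow_ne_zero 2 ht)) hw) h1
  have e1 : (-I * (a * (w*(1-w))⁻¹ * -(t^2)⁻¹ + t⁻¹ * w⁻¹))/2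
      = (I*a - I*t*(1-w))/(2*t^2*w*(1-w)) := by
    rw [div_eq_div_iff two_ne_zero h2t, mul_inv]
    field_simp
    ring
  rw [e1]
  have e2 : (-L2/w + (L2 - 2*(a-t)*I)/w - L1/(1-w) + (L1 - 2*a*I)/(1-w))
      = (-2*(a-t)*I*(1-w) + -2*a*I*w)/(w*(1-w)) := by
    field_simp
    ring
  rw [e2, neg_mul, one_div, ← div_eq_inv_mul, div_div, ← neg_div,
    div_eq_div_iff h2t (by exact mul_ne_zero (mul_ne_zero hw h1) (by simp [ht] : (4*t^2 : ℂ) ≠ 0))]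
  ring

/-- The slope `s(w) = arg(w)/arg(w/(1 − w))` of the simply periodic five-vertex model is
real-differentiable on the upper half-plane, and its Wirtinger derivative is
`s_w = −(1/(4θ²))·(−Log(1−w)/w + Log(1−w̄)/w − Log(w)/(1−w) + Log(w̄)/(1−w))`,
where `θ = arg(w/(1 − w))`. -/
theorem slope_wirtinger_derivative (w : ℂ) (hw : 0 < w.im) :
    let s : ℂ → ℂ := fun v => ((Complex.arg v / Complex.arg (v / (1 - v)) : ℝ) : ℂ)
    let θ : ℝ := Complex.arg (w / (1 - w))
    DifferentiableAt ℝ s w ∧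
      wirtingerDeriv s w =
        -(1 / (4 * (θ : ℂ) ^ 2)) *
          (-Complex.log (1 - w) / w + Complex.log (1 - (starRingEnd ℂ) w) / w
            - Complex.log w / (1 - w) + Complex.log ((starRingEnd ℂ) w) / (1 - w)) := by
  intro s θ
  have hπ := Real.pi_pos
  have hw0 : w ≠ 0 := by intro h; rw [h] at hw; simp at hw
  have h1wim : (1 - w).im = -w.im := by simp
  have h1w : (1 : ℂ) - w ≠ 0 := by
    intro h
    have h2 := congrArg Complex.im h
    rw [h1wim] at h2
    simp at h2
    exact absurd h2 hw.ne'
  have hg0 : w / (1 - w) ≠ 0 := div_ne_zero hw0 h1w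
  have hgim : 0 < (w / (1 - w)).im := by
    have h : (w / (1 - w)).im = w.im / Complex.normSq (1 - w) := by
      rw [Complex.div_im]; simp; ring
    rw [h]
    exact div_pos hw (Complex.normSq_pos.mpr h1w)
  have hwslit : w ∈ Complex.slitPlane := Complex.mem_slitPlane_iff.mpr (Or.inr hw.ne')
  have hgslit : w / (1 - w) ∈ Complex.slitPlane :=
    Complex.mem_slitPlane_iff.mpr (Or.inr hgim.ne')
  -- basic arg facts
  have hargw_pos : 0 < Complex.arg w := by
    rcases lt_or_eq_of_le (Complex.arg_nonneg_iff.mpr hw.le) with h | h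
    · exact h
    · exfalso; have := Complex.arg_eq_zero_iff.mp h.symm; exact absurd this.2 hw.ne'
  have hargw_le : Complex.arg w ≤ Real.pi := Complex.arg_le_pi w
  have hargw_ne : Complex.arg w ≠ Real.pi :=
    ne_of_lt (Complex.arg_lt_pi_iff.mpr (Or.inr hw.ne'))
  have harg1w_neg : Complex.arg (1 - w) < 0 := Complex.arg_neg_iff.mpr (by rw [h1wim]; linarith)
  have harg1w_gt : -Real.pi < Complex.arg (1 - w) := Complex.neg_pi_lt_arg _
  have harg1w_ne : Complex.arg (1 - w) ≠ Real.pi := by linarith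
  have hθpos : 0 < θ := by
    rcases lt_or_eq_of_le (Complex.arg_nonneg_iff.mpr hgim.le) with h | h
    · exact h
    · exfalso; have := Complex.arg_eq_zero_iff.mp h.symm; exact absurd this.2 hgim.ne'
  have hθle : θ ≤ Real.pi := Complex.arg_le_pi _
  have hθ0 : θ ≠ 0 := hθpos.ne'
  -- θ = arg w - arg (1 - w)
  have hθab : θ = Complex.arg w - Complex.arg (1 - w) := by
    have h := Complex.arg_div_coe_angle hw0 h1w
    rw [← Real.Angle.coe_sub, Real.Angle.angle_eq_iff_two_pi_dvd_sub] at h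
    obtain ⟨k, hk⟩ := h
    have hk0 : k = 0 := by
      have h1 : (k : ℝ) < 1 := by nlinarith
      have h2 : (-1 : ℝ) < (k : ℝ) := by nlinarith
      have h1' : k < 1 := by exact_mod_cast h1
      have h2' : -1 < k := by exact_mod_cast h2
      omega
    rw [hk0] at hk
    simp at hk
    linarith
  -- derivative of arg
  have hA : HasFDerivAt (fun v => Complex.arg v)
      (Complex.imCLM.comp (((1 : ℂ →L[ℂ] ℂ).smulRight w⁻¹).restrictScalars ℝ)) w :=
    hasFDerivAt_arg_comp (hasDerivAt_id w) hwslit w⁻¹ (mul_one _)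
  -- derivative of arg (v / (1 - v))
  have hgder : HasDerivAt (fun v : ℂ => v / (1 - v))
      ((1 * (1 - w) - w * (-1)) / (1 - w) ^ 2) w :=
    (hasDerivAt_id w).div ((hasDerivAt_id w).const_sub 1) h1w
  have hB : HasFDerivAt (fun v => Complex.arg (v / (1 - v)))
      (Complex.imCLM.comp (((1 : ℂ →L[ℂ] ℂ).smulRight ((w * (1 - w))⁻¹)).restrictScalars ℝ)) w := by
    refine hasFDerivAt_arg_comp hgder hgslit _ ?_
    field_simp
    ring
  set A := Complex.imCLM.comp (((1 : ℂ →L[ℂ] ℂ).smulRight w⁻¹).restrictScalars ℝ) with hAdef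
  set B := Complex.imCLM.comp
      (((1 : ℂ →L[ℂ] ℂ).smulRight ((w * (1 - w))⁻¹)).restrictScalars ℝ) with hBdef
  -- inverse
  have hinv : HasFDerivAt (fun v => (Complex.arg (v / (1 - v)))⁻¹)
      (((1 : ℝ →L[ℝ] ℝ).smulRight (-(θ ^ 2)⁻¹)).comp B) w :=
    ((hasDerivAt_inv hθ0).hasFDerivAt).comp w hB
  -- product
  have hmul : HasFDerivAt (fun v => Complex.arg v * (Complex.arg (v / (1 - v)))⁻¹)
      (Complex.arg w • (((1 : ℝ →L[ℝ] ℝ).smulRight (-(θ ^ 2)⁻¹)).comp B) + θ⁻¹ • A) w :=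
    hA.mul hinv
  have hs : HasFDerivAt s
      (Complex.ofRealCLM.comp
        (Complex.arg w • (((1 : ℝ →L[ℝ] ℝ).smulRight (-(θ ^ 2)⁻¹)).comp B) + θ⁻¹ • A)) w := by
    have := Complex.ofRealCLM.hasFDerivAt.comp w hmul
    simpa [s, Function.comp_def, div_eq_mul_inv] using this
  refine ⟨hs.differentiableAt, ?_⟩
  rw [wirtingerDeriv, hs.fderiv]
  -- evaluate the linear maps
  simp only [ContinuousLinearMap.coe_comp', Function.comp_apply,
    ContinuousLinearMap.add_apply, ContinuousLinearMap.coe_smul', Pi.smul_apply,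
    ContinuousLinearMap.smulRight_apply, ContinuousLinearMap.one_apply,
    ContinuousLinearMap.coe_restrictScalars', Complex.imCLM_apply, Complex.ofRealCLM_apply,
    smul_eq_mul, one_mul, hAdef, hBdef]
  -- rewrite the RHS logs
  rw [show (1 : ℂ) - (starRingEnd ℂ) w = (starRingEnd ℂ) (1 - w) by rw [map_sub, map_one],
    Complex.log_conj _ hargw_ne, Complex.log_conj _ harg1w_ne]
  have hclw : (starRingEnd ℂ) (Complex.log w)
      = Complex.log w - 2 * (Complex.arg w : ℂ) * Complex.I := by
    have h := Complex.sub_conj (Complex.log w)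
    rw [Complex.log_im] at h
    push_cast at h ⊢
    linear_combination -h
  have hcl1w : (starRingEnd ℂ) (Complex.log (1 - w))
      = Complex.log (1 - w) - 2 * ((Complex.arg w : ℂ) - (θ : ℂ)) * Complex.I := by
    have h := Complex.sub_conj (Complex.log (1 - w))
    rw [Complex.log_im] at h
    have hb : (Complex.arg (1 - w) : ℂ) = (Complex.arg w : ℂ) - (θ : ℂ) := by
      have : Complex.arg (1 - w) = Complex.arg w - θ := by linarith [hθab]
      rw [this]; push_cast; ring
    push_cast at h ⊢
    rw [← hb]
    linear_combination -h
  rw [hclw, hcl1w]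
  -- now combine the left side using key_im
  have hmain : ((Complex.arg w * ((((w * (1 - w))⁻¹).im) * -(θ ^ 2)⁻¹)
        + θ⁻¹ * ((w⁻¹).im) : ℝ) : ℂ)
      - Complex.I * ((Complex.arg w * (((Complex.I * (w * (1 - w))⁻¹).im) * -(θ ^ 2)⁻¹)
        + θ⁻¹ * ((Complex.I * w⁻¹).im) : ℝ) : ℂ)
      = -Complex.I * ((Complex.arg w : ℂ) * (w * (1 - w))⁻¹ * (-((θ : ℂ) ^ 2)⁻¹)
        + ((θ : ℂ))⁻¹ * w⁻¹) := by
    push_cast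
    linear_combination ((Complex.arg w : ℂ) * (-((θ : ℂ) ^ 2)⁻¹)) * key_im ((w * (1 - w))⁻¹)
      + ((θ : ℂ))⁻¹ * key_im w⁻¹
  rw [hmain]
  have hθC : (θ : ℂ) ≠ 0 := Complex.ofReal_ne_zero.mpr hθ0
  exact slope_algebra w _ _ _ _ hw0 h1w hθC
end

section
/- Define Li : ℍ → ℂ by Li(w) = −∫₀¹ Log(1 − t·w)/t dt, and define Y : ℍ → ℝ by Y(w) = (1/π)·( arg(w)·log|1 − w| + Im Li(w) ) − log|w·(1 − w)| and s : ℍ → ℝ by s(w) = (π − arg(w))/(2π − arg(w/(1 − w))). Then for every w ∈ ℍ, Y and s are real-differentiable at w and their Wirtinger derivatives satisfy π·Y_w = i·θ²·s_w, where θ = 2π − arg(w/(1 − w)). -/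
open Complex
open MeasureTheory intervalIntegral Metric

/-- The dilogarithm `Li(w) = −∫₀¹ Log(1 − t·w)/t dt`. -/
noncomputable def dilog (w : ℂ) : ℂ :=
  -∫ t in (0 : ℝ)..1, Complex.log (1 - (t : ℂ) * w) / (t : ℂ)


-- lower bound lemma
lemma lb {w : ℂ} (hw : 0 < w.im) :
    ∃ δ > 0, ∀ t ∈ Set.Ioc (0:ℝ) 1, ∀ x ∈ ball w (w.im/2),
      δ ≤ ‖1 - (t:ℂ) * x‖ := by
  set ε := w.im/2 with hε
  have hεpos : 0 < ε := by positivity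
  set R := ‖w‖ + ε with hR
  have hRpos : 0 < R := by positivity
  refine ⟨min (1/2) (ε/(2*R)), by positivity, ?_⟩
  rintro t ⟨ht0, ht1⟩ x hx
  have hxw : ‖x - w‖ < ε := by simpa [dist_eq] using hx
  have hxR : ‖x‖ < R := by
    calc ‖x‖ ≤ ‖w‖ + ‖x - w‖ := by
          simpa using norm_add_le w (x - w)
      _ < R := by rw [hR]; linarith
  have hxim : ε < x.im := by
    have h1 : |x.im - w.im| ≤ ‖x - w‖ := by
      simpa using Complex.abs_im_le_norm (x - w)
    have := abs_lt.1 (lt_of_le_of_lt h1 hxw)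
    simp only [hε] at *
    linarith [this.1]
  rcases le_or_gt (t * R) (1/2) with h | h
  · refine le_trans (min_le_left _ _) ?_
    have habs : ‖(t:ℂ) * x‖ ≤ 1/2 := by
      rw [norm_mul]
      have : ‖(t:ℂ)‖ = t := by
        rw [Complex.norm_real, Real.norm_eq_abs, abs_of_pos ht0]
      rw [this]
      nlinarith
    calc (1:ℝ)/2 = 1 - 1/2 := by norm_num
      _ ≤ 1 - ‖(t:ℂ)*x‖ := by linarith
      _ = ‖(1:ℂ)‖ - ‖(t:ℂ)*x‖ := by simp
      _ ≤ ‖1 - (t:ℂ)*x‖ := by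
          simpa using norm_sub_norm_le (1:ℂ) ((t:ℂ)*x)
  · refine le_trans (min_le_right _ _) ?_
    have him : (1 - (t:ℂ)*x).im = -(t * x.im) := by simp
    have h2 : t * x.im ≤ ‖1 - (t:ℂ)*x‖ := by
      have := Complex.abs_im_le_norm (1 - (t:ℂ)*x)
      rw [him, abs_neg, abs_of_pos (by nlinarith)] at this
      exact this
    have ht' : 1/(2*R) < t := by
      rw [div_lt_iff₀ (by positivity)]
      nlinarith
    have hx0 : (0:ℝ) < x.im := lt_trans hεpos hxim
    have h1 : 1 < 2*R*t := by
      rw [div_lt_iff₀ (by positivity)] at ht'; nlinarith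
    have e1 : ε < 2*R*t*ε := by nlinarith [mul_lt_mul_of_pos_right h1 hεpos]
    have e2 : 2*R*t*ε < 2*R*t*x.im := by
      apply mul_lt_mul_of_pos_left hxim (by positivity)
    have : ε/(2*R) < t * x.im := by
      rw [div_lt_iff₀ (by positivity)]
      nlinarith
    linarith

lemma slit_aux {t : ℝ} (ht : 0 < t) {x : ℂ} (hx : 0 < x.im) :
    1 - (t:ℂ) * x ∈ Complex.slitPlane := by
  rw [Complex.mem_slitPlane_iff]
  right
  simp only [Complex.sub_im, Complex.one_im, Complex.mul_im, Complex.ofReal_re,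
    Complex.ofReal_im]
  intro hc
  nlinarith

lemma hasDerivAt_dilog {w : ℂ} (hw : 0 < w.im) :
    HasDerivAt dilog (-Complex.log (1 - w) / w) w := by
  obtain ⟨δ, hδ, hδle⟩ := lb hw
  set ε := w.im/2 with hε
  have hεpos : 0 < ε := by positivity
  have hwball : w ∈ ball w ε := mem_ball_self hεpos
  have hw0 : w ≠ 0 := by
    intro h; rw [h] at hw; simp at hw
  have haw : 0 < ‖w‖ := norm_pos_iff.mpr hw0
  -- measurability of F x
  have hmeas : ∀ x : ℂ, AEStronglyMeasurable (fun t : ℝ => Complex.log (1 - (t:ℂ)*x) / (t:ℂ))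
      (volume.restrict (Set.uIoc (0:ℝ) 1)) := by
    intro x
    apply Measurable.aestronglyMeasurable
    exact ((Complex.measurable_log.comp
      ((measurable_const.sub ((Complex.measurable_ofReal.comp measurable_id).mul_const x))))).div
      Complex.measurable_ofReal
  -- integrability of F w
  have hC : ∀ t ∈ Set.Ioc (0:ℝ) 1, ‖Complex.log (1 - (t:ℂ)*w) / (t:ℂ)‖ ≤
      (3/2) * ‖w‖ + (2 * ‖w‖) *
        (|Real.log δ| + Real.log (1 + ‖w‖) + Real.pi) := by
    rintro t ⟨ht0, ht1⟩
    have htc : ‖(t:ℂ)‖ = t := by rw [Complex.norm_real, Real.norm_eq_abs, abs_of_pos ht0]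
    have hlogpos : 0 ≤ Real.log (1 + ‖w‖) := Real.log_nonneg (by linarith)
    have hnorm : ‖Complex.log (1 - (t:ℂ)*w) / (t:ℂ)‖ = ‖Complex.log (1 - (t:ℂ)*w)‖ / t := by
      rw [norm_div, htc]
    rcases le_or_gt (t * ‖w‖) (1/2) with h | h
    · -- small t : use norm_log_one_add_half_le_self
      have hz : ‖-((t:ℂ)*w)‖ ≤ 1/2 := by
        rw [norm_neg, norm_mul, htc]; exact h
      have := Complex.norm_log_one_add_half_le_self hz
      rw [show (1 : ℂ) + -((t:ℂ)*w) = 1 - (t:ℂ)*w by ring] at this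
      rw [hnorm]
      have this2 : ‖Complex.log (1 - (t:ℂ)*w)‖ ≤ 3/2 * (t * ‖w‖) := by
        calc ‖Complex.log (1 - (t:ℂ)*w)‖ ≤ 3/2 * ‖-((t:ℂ)*w)‖ := by
              simpa using this
          _ = 3/2 * (t * ‖w‖) := by
              rw [norm_neg, norm_mul, htc]
      rw [div_le_iff₀ ht0]
      calc ‖Complex.log (1 - (t:ℂ)*w)‖ ≤ 3/2 * (t * ‖w‖) := this2
        _ = (3/2) * ‖w‖ * t := by ring
        _ ≤ ((3/2) * ‖w‖ + (2 * ‖w‖) *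
            (|Real.log δ| + Real.log (1 + ‖w‖) + Real.pi)) * t := by
            have : 0 ≤ (2 * ‖w‖) * (|Real.log δ| + Real.log (1 + ‖w‖) + Real.pi) := by
              positivity
            nlinarith
    · -- large t
      have hδ1 : δ ≤ ‖1 - (t:ℂ)*w‖ := hδle t ⟨ht0, ht1⟩ w hwball
      have hub : ‖1 - (t:ℂ)*w‖ ≤ 1 + ‖w‖ := by
        calc ‖1 - (t:ℂ)*w‖ ≤ ‖(1:ℂ)‖ + ‖(t:ℂ)*w‖ := by
              simpa using norm_sub_le (1:ℂ) ((t:ℂ)*w)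
          _ ≤ 1 + ‖w‖ := by
              rw [norm_one, norm_mul, htc]
              nlinarith [norm_nonneg w]
      have hlogbound : ‖Complex.log (1 - (t:ℂ)*w)‖ ≤
          |Real.log δ| + Real.log (1 + ‖w‖) + Real.pi := by
        calc ‖Complex.log (1 - (t:ℂ)*w)‖ ≤
            |(Complex.log (1 - (t:ℂ)*w)).re| + |(Complex.log (1 - (t:ℂ)*w)).im| :=
              Complex.norm_le_abs_re_add_abs_im _
          _ ≤ (|Real.log δ| + Real.log (1 + ‖w‖)) + Real.pi := by
              apply add_le_add
              · rw [Complex.log_re]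
                have hl : Real.log δ ≤ Real.log (‖1 - (t:ℂ)*w‖) :=
                  Real.log_le_log hδ hδ1
                have hu : Real.log (‖1 - (t:ℂ)*w‖) ≤ Real.log (1 + ‖w‖) :=
                  Real.log_le_log (lt_of_lt_of_le hδ hδ1) hub
                rw [abs_le]
                constructor
                · have := neg_abs_le (Real.log δ)
                  have hlog1 : 0 ≤ Real.log (1 + ‖w‖) := Real.log_nonneg (by linarith)
                  linarith
                · have := le_abs_self (Real.log δ)
                  have hl2 : Real.log δ ≥ -|Real.log δ| := neg_abs_le _
                  linarith
              · rw [Complex.log_im]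
                exact Complex.abs_arg_le_pi _
          _ = |Real.log δ| + Real.log (1 + ‖w‖) + Real.pi := by ring
      rw [hnorm, div_le_iff₀ ht0]
      have ht2 : 1 ≤ 2 * ‖w‖ * t := by nlinarith
      calc ‖Complex.log (1 - (t:ℂ)*w)‖ ≤
          (|Real.log δ| + Real.log (1 + ‖w‖) + Real.pi) * 1 := by
            rw [mul_one]; exact hlogbound
        _ ≤ (|Real.log δ| + Real.log (1 + ‖w‖) + Real.pi) * (2 * ‖w‖ * t) := by
            apply mul_le_mul_of_nonneg_left ht2
            positivity
        _ = (2 * ‖w‖) * (|Real.log δ| + Real.log (1 + ‖w‖) + Real.pi) * t := by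
            ring
        _ ≤ ((3/2) * ‖w‖ + (2 * ‖w‖) *
            (|Real.log δ| + Real.log (1 + ‖w‖) + Real.pi)) * t := by
            nlinarith [norm_nonneg w]
  have hF_int : IntervalIntegrable (fun t : ℝ => Complex.log (1 - (t:ℂ)*w) / (t:ℂ))
      volume 0 1 := by
    rw [intervalIntegrable_iff_integrableOn_Ioc_of_le (by norm_num : (0:ℝ) ≤ 1)]
    apply Integrable.mono' (integrableOn_const (C := (3/2) * ‖w‖ + (2 * ‖w‖) *
        (|Real.log δ| + Real.log (1 + ‖w‖) + Real.pi)) measure_Ioc_lt_top.ne)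
    · have := hmeas w
      rwa [Set.uIoc_of_le (by norm_num : (0:ℝ) ≤ 1)] at this
    · filter_upwards [ae_restrict_mem measurableSet_Ioc] with t ht
      exact hC t ht
  -- derivative bound
  have hbd : ∀ t ∈ Set.uIoc (0:ℝ) 1, ∀ x ∈ ball w ε, ‖-(1 - (t:ℂ)*x)⁻¹‖ ≤ δ⁻¹ := by
    intro t ht x hx
    rw [Set.uIoc_of_le (by norm_num : (0:ℝ) ≤ 1)] at ht
    have := hδle t ht x hx
    rw [norm_neg, norm_inv]
    exact inv_anti₀ hδ this
  have hdiff : ∀ t ∈ Set.uIoc (0:ℝ) 1, ∀ x ∈ ball w ε,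
      HasDerivAt (fun y : ℂ => Complex.log (1 - (t:ℂ)*y) / (t:ℂ)) (-(1 - (t:ℂ)*x)⁻¹) x := by
    intro t ht x hx
    rw [Set.uIoc_of_le (by norm_num : (0:ℝ) ≤ 1)] at ht
    have ht0 : (0:ℝ) < t := ht.1
    have hxim : 0 < x.im := by
      have h1 : |x.im - w.im| ≤ ‖x - w‖ := by
        simpa using Complex.abs_im_le_norm (x - w)
      have hxw : ‖x - w‖ < ε := by simpa [dist_eq] using hx
      have := abs_lt.1 (lt_of_le_of_lt h1 hxw)
      simp only [hε] at this ⊢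
      linarith [this.1]
    have hslit := slit_aux ht0 hxim
    have htne : ((t:ℝ):ℂ) ≠ 0 := by
      simp only [ne_eq, Complex.ofReal_eq_zero]
      exact ne_of_gt ht0
    have h1 : HasDerivAt (fun y : ℂ => 1 - (t:ℂ)*y) (-(t:ℂ)) x := by
      simpa using ((hasDerivAt_id x).const_mul (t:ℂ)).const_sub 1
    have h2 : HasDerivAt Complex.log (1 - (t:ℂ)*x)⁻¹ (1 - (t:ℂ)*x) :=
      Complex.hasDerivAt_log hslit
    have h3 := (h2.comp x h1).div_const (t:ℂ)
    have hne : 1 - (t:ℂ)*x ≠ 0 := Complex.slitPlane_ne_zero hslit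
    refine h3.congr_deriv ?_
    rw [mul_neg, neg_div, mul_div_assoc, div_self htne, mul_one]
  have key := intervalIntegral.hasDerivAt_integral_of_dominated_loc_of_deriv_le
    (F := fun x t => Complex.log (1 - (t:ℂ)*x) / (t:ℂ))
    (F' := fun x t => -(1 - (t:ℂ)*x)⁻¹)
    (bound := fun _ => δ⁻¹) (ball_mem_nhds w hεpos)
    (Filter.Eventually.of_forall hmeas) hF_int
    (by
      apply Continuous.aestronglyMeasurable
      apply Continuous.neg
      apply Continuous.inv₀
      · exact continuous_const.sub ((Complex.continuous_ofReal).mul continuous_const)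
      · intro t
        intro hc
        have him : (1 - (t:ℂ)*w).im = -(t * w.im) := by simp
        have hre : (1 - (t:ℂ)*w).re = 1 - t * w.re := by simp
        rw [hc] at him hre
        simp at him hre
        rcases him with h | h
        · rw [h] at hre; simp at hre
        · exact absurd h (ne_of_gt hw)
    )
    (Filter.Eventually.of_forall hbd) intervalIntegrable_const
    (Filter.Eventually.of_forall hdiff)
  obtain ⟨-, hkey⟩ := key
  -- evaluate the integral ∫ -(1-tw)⁻¹
  have hval : (∫ t in (0:ℝ)..1, -(1 - (t:ℂ)*w)⁻¹) = Complex.log (1 - w) / w := by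
    rw [intervalIntegral.integral_neg]
    have hcont : Continuous (fun t : ℝ => (1 - (t:ℂ)*w)⁻¹) := by
      apply Continuous.inv₀
      · exact continuous_const.sub ((Complex.continuous_ofReal).mul continuous_const)
      · intro t
        intro hc
        have him : (1 - (t:ℂ)*w).im = -(t * w.im) := by simp
        rw [hc] at him
        simp at him
        rcases him with h | h
        · rw [h] at hc; simp at hc
        · exact absurd h (ne_of_gt hw)
    have hftc : ∀ t ∈ Set.uIcc (0:ℝ) 1,
        HasDerivAt (fun s : ℝ => -Complex.log (1 - (s:ℂ)*w) / w) ((1 - (t:ℂ)*w)⁻¹) t := by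
      intro t ht
      rw [Set.uIcc_of_le (by norm_num : (0:ℝ) ≤ 1)] at ht
      have hslit : 1 - (t:ℂ)*w ∈ Complex.slitPlane := by
        rcases eq_or_lt_of_le ht.1 with h | h
        · rw [Complex.mem_slitPlane_iff]
          left
          rw [← h]
          norm_num
        · exact slit_aux h hw
      have h1 : HasDerivAt (fun z : ℂ => -Complex.log (1 - z*w) / w)
          ((1 - (t:ℂ)*w)⁻¹) ((t:ℝ):ℂ) := by
        have ha : HasDerivAt (fun z : ℂ => 1 - z*w) (-w) ((t:ℝ):ℂ) := by
          simpa using ((hasDerivAt_id ((t:ℝ):ℂ)).mul_const w).const_sub 1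
        have hb := Complex.hasDerivAt_log hslit
        have hc := ((hb.comp ((t:ℝ):ℂ) ha).neg).div_const w
        have hne : 1 - ((t:ℝ):ℂ)*w ≠ 0 := Complex.slitPlane_ne_zero hslit
        refine hc.congr_deriv ?_
        field_simp
      exact h1.comp_ofReal
    have := intervalIntegral.integral_eq_sub_of_hasDerivAt hftc
      (hcont.intervalIntegrable 0 1)
    rw [this]
    simp [Complex.log_one]
    ring
  have hkey' : HasDerivAt (fun x : ℂ => ∫ t in (0:ℝ)..1, Complex.log (1 - (t:ℂ)*x) / (t:ℂ))
      (∫ t in (0:ℝ)..1, -(1 - (t:ℂ)*w)⁻¹) w := hkey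
  rw [hval] at hkey'
  have hdef : dilog = fun x => -∫ t in (0:ℝ)..1, Complex.log (1 - (t:ℂ)*x) / (t:ℂ) := rfl
  rw [hdef]
  rw [neg_div]
  exact hkey'.neg


lemma wirt_congr {f g : ℂ → ℂ} {w : ℂ} (h : f =ᶠ[nhds w] g) :
    wirtingerDeriv f w = wirtingerDeriv g w := by
  rw [wirtingerDeriv, wirtingerDeriv, h.fderiv_eq]

lemma wirt_of_hasFDerivAt {f : ℂ → ℂ} {L : ℂ →L[ℝ] ℂ} {w : ℂ} (h : HasFDerivAt f L w) :
    wirtingerDeriv f w = (L 1 - Complex.I * L Complex.I) / 2 := by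
  rw [wirtingerDeriv, h.fderiv]

lemma hasFDerivAt_re_ofReal {g : ℂ → ℂ} {g' w : ℂ} (hg : HasDerivAt g g' w) :
    HasFDerivAt (fun v => (((g v).re : ℝ) : ℂ))
      (Complex.ofRealCLM.comp (Complex.reCLM.comp
        ((ContinuousLinearMap.smulRight (1 : ℂ →L[ℂ] ℂ) g').restrictScalars ℝ))) w :=
  Complex.ofRealCLM.hasFDerivAt.comp w (Complex.reCLM.hasFDerivAt.comp w
    ((hg.hasFDerivAt).restrictScalars ℝ))

lemma hasFDerivAt_im_ofReal {g : ℂ → ℂ} {g' w : ℂ} (hg : HasDerivAt g g' w) :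
    HasFDerivAt (fun v => (((g v).im : ℝ) : ℂ))
      (Complex.ofRealCLM.comp (Complex.imCLM.comp
        ((ContinuousLinearMap.smulRight (1 : ℂ →L[ℂ] ℂ) g').restrictScalars ℝ))) w :=
  Complex.ofRealCLM.hasFDerivAt.comp w (Complex.imCLM.hasFDerivAt.comp w
    ((hg.hasFDerivAt).restrictScalars ℝ))

lemma wirt_re {g : ℂ → ℂ} {g' w : ℂ} (hg : HasDerivAt g g' w) :
    wirtingerDeriv (fun v => (((g v).re : ℝ) : ℂ)) w = g' / 2 := by
  rw [wirt_of_hasFDerivAt (hasFDerivAt_re_ofReal hg)]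
  simp [Complex.mul_re, Complex.mul_im]
  conv_rhs => rw [← Complex.re_add_im g']
  push_cast
  ring

lemma wirt_im {g : ℂ → ℂ} {g' w : ℂ} (hg : HasDerivAt g g' w) :
    wirtingerDeriv (fun v => (((g v).im : ℝ) : ℂ)) w = -(Complex.I * g') / 2 := by
  rw [wirt_of_hasFDerivAt (hasFDerivAt_im_ofReal hg)]
  simp [Complex.mul_re, Complex.mul_im]
  conv_rhs => rw [← Complex.re_add_im g']
  linear_combination (g'.im:ℂ) * Complex.I_sq

lemma wirt_add {f g : ℂ → ℂ} {w : ℂ} (hf : DifferentiableAt ℝ f w)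
    (hg : DifferentiableAt ℝ g w) :
    wirtingerDeriv (fun v => f v + g v) w = wirtingerDeriv f w + wirtingerDeriv g w := by
  simp only [wirtingerDeriv, fderiv_fun_add hf hg, ContinuousLinearMap.add_apply]
  ring

lemma wirt_sub {f g : ℂ → ℂ} {w : ℂ} (hf : DifferentiableAt ℝ f w)
    (hg : DifferentiableAt ℝ g w) :
    wirtingerDeriv (fun v => f v - g v) w = wirtingerDeriv f w - wirtingerDeriv g w := by
  simp only [wirtingerDeriv, fderiv_fun_sub hf hg, ContinuousLinearMap.sub_apply]
  ring

lemma wirt_const_mul {f : ℂ → ℂ} {w : ℂ} (c : ℂ) (hf : DifferentiableAt ℝ f w) :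
    wirtingerDeriv (fun v => c * f v) w = c * wirtingerDeriv f w := by
  simp only [wirtingerDeriv, fderiv_const_mul hf c, ContinuousLinearMap.smul_apply,
    smul_eq_mul]
  ring

lemma wirt_const_sub {f : ℂ → ℂ} {w : ℂ} (c : ℂ) (hf : DifferentiableAt ℝ f w) :
    wirtingerDeriv (fun v => c - f v) w = -wirtingerDeriv f w := by
  have h1 : DifferentiableAt ℝ (fun _ : ℂ => c) w := differentiableAt_const c
  rw [wirt_sub h1 hf]
  simp [wirtingerDeriv, fderiv_const]

lemma wirt_mul {f g : ℂ → ℂ} {w : ℂ} (hf : DifferentiableAt ℝ f w)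
    (hg : DifferentiableAt ℝ g w) :
    wirtingerDeriv (fun v => f v * g v) w =
      f w * wirtingerDeriv g w + wirtingerDeriv f w * g w := by
  simp only [wirtingerDeriv, fderiv_fun_mul hf hg, ContinuousLinearMap.add_apply,
    ContinuousLinearMap.smul_apply, ContinuousLinearMap.smulRight_apply, smul_eq_mul]
  ring

lemma wirt_inv {f : ℂ → ℂ} {w : ℂ} (hf : DifferentiableAt ℝ f w) (hf0 : f w ≠ 0) :
    wirtingerDeriv (fun v => (f v)⁻¹) w = -((f w)^2)⁻¹ * wirtingerDeriv f w := by
  have h1 : HasDerivAt Inv.inv (-((f w)^2)⁻¹) (f w) := hasDerivAt_inv hf0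
  have h2 : HasFDerivAt (fun v => (f v)⁻¹)
      (((ContinuousLinearMap.smulRight (1 : ℂ →L[ℂ] ℂ)
        (-((f w)^2)⁻¹)).restrictScalars ℝ).comp (fderiv ℝ f w)) w :=
    (h1.hasFDerivAt.restrictScalars ℝ).comp w hf.hasFDerivAt
  rw [wirt_of_hasFDerivAt h2]
  simp only [ContinuousLinearMap.coe_comp', Function.comp_apply,
    ContinuousLinearMap.coe_restrictScalars', ContinuousLinearMap.smulRight_apply,
    ContinuousLinearMap.one_apply, smul_eq_mul, wirtingerDeriv]
  ring


lemma im_div_pos {v : ℂ} (hv : 0 < v.im) : 0 < (v / (1 - v)).im := by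
  have hne : (1 - v) ≠ 0 := by
    intro h
    have : (1 - v).im = 0 := by rw [h]; simp
    simp at this
    exact absurd this (ne_of_lt (by simpa using hv)).symm
  rw [Complex.div_im]
  have hsq : 0 < Complex.normSq (1 - v) := Complex.normSq_pos.2 hne
  have h1 : (1 - v).re = 1 - v.re := by simp
  have h2 : (1 - v).im = -v.im := by simp
  rw [h1, h2]
  have : v.im * (1 - v.re) / Complex.normSq (1 - v) - v.re * -v.im / Complex.normSq (1 - v)
      = v.im / Complex.normSq (1 - v) := by
    field_simp
    ring
  rw [this]
  positivity

lemma arg_div_upper_s17 {v : ℂ} (hv : 0 < v.im) :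
    Complex.arg (v / (1 - v)) = Complex.arg v - Complex.arg (1 - v) := by
  have hv0 : v ≠ 0 := by
    intro h; rw [h] at hv; simp at hv
  have h1vim : (1 - v).im < 0 := by simpa using hv
  have h1v0 : (1 - v) ≠ 0 := by
    intro h; rw [h] at h1vim; simp at h1vim
  have hq := im_div_pos hv
  -- angle equality
  have hang := Complex.arg_div_coe_angle hv0 h1v0
  rw [← Real.Angle.coe_sub] at hang
  obtain ⟨k, hk⟩ := Real.Angle.angle_eq_iff_two_pi_dvd_sub.1 hang
  -- bounds
  have ha1 : 0 < Complex.arg v := by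
    by_contra h
    push_neg at h
    rcases lt_or_eq_of_le h with h | h
    · have := Complex.arg_neg_iff.1 h
      linarith
    · have := Complex.arg_eq_zero_iff.1 h
      linarith [this.2, hq]

  have ha2 : Complex.arg v < Real.pi := Complex.arg_lt_pi_iff.2 (Or.inr (ne_of_gt hv))
  have hb1 : Complex.arg (1 - v) < 0 := Complex.arg_neg_iff.2 h1vim
  have hb2 : -Real.pi < Complex.arg (1 - v) := Complex.neg_pi_lt_arg _
  have hq1 : 0 < Complex.arg (v / (1 - v)) := by
    by_contra h
    push_neg at h
    rcases lt_or_eq_of_le h with h | h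
    · have := Complex.arg_neg_iff.1 h
      linarith
    · have := Complex.arg_eq_zero_iff.1 h
      linarith [this.2, hq]
  have hq2 : Complex.arg (v / (1 - v)) < Real.pi :=
    Complex.arg_lt_pi_iff.2 (Or.inr (ne_of_gt hq))
  have hpi := Real.pi_pos
  -- conclude k = 0
  have hk0 : k = 0 := by
    have h1 : (k : ℝ) < 1 := by nlinarith
    have h2 : (-1 : ℝ) < k := by nlinarith
    have h1' : k < 1 := by exact_mod_cast h1
    have h2' : (-1:ℤ) < k := by exact_mod_cast h2
    omega
  rw [hk0] at hk
  push_cast at hk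
  linarith

lemma final_algebra (P iP a b c w o T : ℂ) (hw : w ≠ 0) (ho : o ≠ 0) (hT0 : T ≠ 0)
    (hiP : iP * P = 1) (hT : T = 2*P - (a - c)) :
    P * (iP * (a * (-o⁻¹ / 2) + -(Complex.I * w⁻¹) / 2 * b +
          -(Complex.I * (-(b + c * Complex.I) / w)) / 2) - (w⁻¹ / 2 + -o⁻¹ / 2)) =
    Complex.I * T ^ 2 *
      ((P - a) * (-(T ^ 2)⁻¹ * -(-(Complex.I * w⁻¹) / 2 - -(Complex.I * -o⁻¹) / 2)) +
        -(-(Complex.I * w⁻¹) / 2) * T⁻¹) := by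
  have hT' : T * T⁻¹ = 1 := mul_inv_cancel₀ hT0
  linear_combination
    (a * (-o⁻¹ / 2) + -(Complex.I * w⁻¹) / 2 * b +
        -(Complex.I * (-(b + c * Complex.I) / w)) / 2) * hiP
    + (c*w⁻¹/2 + T^2*((T⁻¹)^2)*(P-a)*(w⁻¹+o⁻¹)/2 - T^2*T⁻¹*w⁻¹/2) * Complex.I_sq
    + (-((T*T⁻¹+1)*(P-a)*(w⁻¹+o⁻¹)/2 - T*w⁻¹/2)) * hT'
    + (w⁻¹/2) * hT

lemma wirtY {A B E C : ℂ → ℂ} {w : ℂ} (c : ℂ)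
    (hA : DifferentiableAt ℝ A w) (hB : DifferentiableAt ℝ B w)
    (hE : DifferentiableAt ℝ E w) (hC : DifferentiableAt ℝ C w) :
    wirtingerDeriv (fun v => c * (A v * B v + E v) - (C v + B v)) w
      = c * ((A w * wirtingerDeriv B w + wirtingerDeriv A w * B w) + wirtingerDeriv E w)
        - (wirtingerDeriv C w + wirtingerDeriv B w) := by
  rw [wirt_sub (f := fun v => c * (A v * B v + E v)) (g := fun v => C v + B v)
        (((hA.mul hB).add hE).const_mul c) (hC.add hB),
      wirt_const_mul (f := fun v => A v * B v + E v) c ((hA.mul hB).add hE),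
      wirt_add (f := fun v => A v * B v) (hA.mul hB) hE, wirt_mul hA hB, wirt_add hC hB]

lemma wirtS {A D : ℂ → ℂ} {w : ℂ} (p : ℂ) (hA : DifferentiableAt ℝ A w)
    (hD : DifferentiableAt ℝ D w) (hne : 2*p - (A w - D w) ≠ 0) :
    wirtingerDeriv (fun v => (p - A v) * (2*p - (A v - D v))⁻¹) w
      = (p - A w) * (-((2*p - (A w - D w))^2)⁻¹
          * (-(wirtingerDeriv A w - wirtingerDeriv D w)))
        + (-(wirtingerDeriv A w)) * (2*p - (A w - D w))⁻¹ := by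
  have hden : DifferentiableAt ℝ (fun v => 2*p - (A v - D v)) w :=
    (hA.sub hD).const_sub (2*p)
  rw [wirt_mul (f := fun v => p - A v) (g := fun v => (2*p - (A v - D v))⁻¹)
        (hA.const_sub p) (hden.inv hne),
      wirt_inv hden hne, wirt_const_sub p hA,
      wirt_const_sub (f := fun v => A v - D v) (2*p) (hA.sub hD),
      wirt_sub hA hD]

set_option maxHeartbeats 2000000 in
/-- Large-`r` case: the magnetic field
`Y(w) = (1/π)(arg(w)·log|1−w| + Im Li(w)) − log|w(1−w)|` and the slope
`s(w) = (π − arg(w))/(2π − arg(w/(1−w)))` are real-differentiable on the upper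
half-plane and satisfy `π·Y_w = i·θ²·s_w` with `θ = 2π − arg(w/(1 − w))`. -/
theorem field_slope_wirtinger_relation_large_r (w : ℂ) (hw : 0 < w.im) :
    let Y : ℂ → ℂ := fun v =>
      (((1 / Real.pi) * (Complex.arg v * Real.log ‖1 - v‖ + (dilog v).im)
          - Real.log ‖v * (1 - v)‖ : ℝ) : ℂ)
    let s : ℂ → ℂ := fun v =>
      (((Real.pi - Complex.arg v) / (2 * Real.pi - Complex.arg (v / (1 - v))) : ℝ) : ℂ)
    let θ : ℝ := 2 * Real.pi - Complex.arg (w / (1 - w))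
    DifferentiableAt ℝ Y w ∧ DifferentiableAt ℝ s w ∧
      (Real.pi : ℂ) * wirtingerDeriv Y w = Complex.I * (θ : ℂ) ^ 2 * wirtingerDeriv s w := by
  intro Y s θ
  have hpi := Real.pi_pos
  have hw0 : w ≠ 0 := fun h => by rw [h] at hw; simp at hw
  have hw1 : w ≠ 1 := fun h => by rw [h] at hw; simp at hw
  have h1w0 : (1 : ℂ) - w ≠ 0 := sub_ne_zero.2 (Ne.symm hw1)
  have h1wim : ((1:ℂ) - w).im < 0 := by simpa using hw
  have hwslit : w ∈ Complex.slitPlane := Complex.mem_slitPlane_iff.2 (Or.inr (ne_of_gt hw))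
  have h1wslit : (1:ℂ) - w ∈ Complex.slitPlane :=
    Complex.mem_slitPlane_iff.2 (Or.inr (ne_of_lt h1wim))
  have hL1 : HasDerivAt Complex.log w⁻¹ w := Complex.hasDerivAt_log hwslit
  have hL2 : HasDerivAt (fun v => Complex.log (1 - v)) (-((1:ℂ)-w)⁻¹) w := by
    have ha : HasDerivAt (fun v : ℂ => 1 - v) (-1) w := by
      simpa using (hasDerivAt_id w).const_sub 1
    have hb := Complex.hasDerivAt_log h1wslit
    have hc := hb.comp w ha
    refine hc.congr_deriv ?_
    ring
  have hLi : HasDerivAt dilog (-Complex.log (1-w)/w) w := hasDerivAt_dilog hw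
  -- building blocks
  have hdA : DifferentiableAt ℝ (fun v : ℂ => (((Complex.log v).im : ℝ) : ℂ)) w :=
    (hasFDerivAt_im_ofReal hL1).differentiableAt
  have hdB : DifferentiableAt ℝ (fun v : ℂ => (((Complex.log (1-v)).re : ℝ) : ℂ)) w :=
    (hasFDerivAt_re_ofReal hL2).differentiableAt
  have hdC : DifferentiableAt ℝ (fun v : ℂ => (((Complex.log v).re : ℝ) : ℂ)) w :=
    (hasFDerivAt_re_ofReal hL1).differentiableAt
  have hdD : DifferentiableAt ℝ (fun v : ℂ => (((Complex.log (1-v)).im : ℝ) : ℂ)) w :=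
    (hasFDerivAt_im_ofReal hL2).differentiableAt
  have hdE : DifferentiableAt ℝ (fun v : ℂ => (((dilog v).im : ℝ) : ℂ)) w :=
    (hasFDerivAt_im_ofReal hLi).differentiableAt
  have wA : wirtingerDeriv (fun v : ℂ => (((Complex.log v).im : ℝ) : ℂ)) w
      = -(Complex.I * w⁻¹)/2 := wirt_im hL1
  have wB : wirtingerDeriv (fun v : ℂ => (((Complex.log (1-v)).re : ℝ) : ℂ)) w
      = (-((1:ℂ)-w)⁻¹)/2 := wirt_re hL2
  have wC : wirtingerDeriv (fun v : ℂ => (((Complex.log v).re : ℝ) : ℂ)) w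
      = w⁻¹/2 := wirt_re hL1
  have wD : wirtingerDeriv (fun v : ℂ => (((Complex.log (1-v)).im : ℝ) : ℂ)) w
      = -(Complex.I * (-((1:ℂ)-w)⁻¹))/2 := wirt_im hL2
  have wE : wirtingerDeriv (fun v : ℂ => (((dilog v).im : ℝ) : ℂ)) w
      = -(Complex.I * (-((((Complex.log (1-w)).re : ℝ):ℂ)
          + (((Complex.log (1-w)).im : ℝ):ℂ) * Complex.I)/w))/2 := by
    rw [wirt_im hLi, Complex.re_add_im]
  -- eventual equality for Y
  have hYF : Y =ᶠ[nhds w] (fun v => ((1/Real.pi : ℝ) : ℂ) *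
      ((((Complex.log v).im : ℝ) : ℂ) * (((Complex.log (1-v)).re : ℝ) : ℂ)
        + (((dilog v).im : ℝ) : ℂ))
      - ((((Complex.log v).re : ℝ) : ℂ) + (((Complex.log (1-v)).re : ℝ) : ℂ))) := by
    have hUopen : IsOpen {v : ℂ | v ≠ 0 ∧ v ≠ 1} := by
      have : {v : ℂ | v ≠ 0 ∧ v ≠ 1} = ({(0:ℂ)}ᶜ ∩ {(1:ℂ)}ᶜ) := by
        ext v; simp [Set.mem_compl_iff]
      rw [this]
      exact isOpen_compl_singleton.inter isOpen_compl_singleton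
    filter_upwards [hUopen.mem_nhds ⟨hw0, hw1⟩] with v hv
    obtain ⟨hv0, hv1⟩ := hv
    have h1v0 : (1 : ℂ) - v ≠ 0 := sub_ne_zero.2 (Ne.symm hv1)
    simp only [Y]
    rw [← Complex.log_im, ← Complex.log_re (1-v),
        norm_mul,
        Real.log_mul (norm_ne_zero_iff.mpr hv0) (norm_ne_zero_iff.mpr h1v0),
        ← Complex.log_re (1-v), ← Complex.log_re v]
    push_cast
    ring
  -- eventual equality for s
  have hsG : s =ᶠ[nhds w] (fun v => (((Real.pi : ℝ) : ℂ) - (((Complex.log v).im : ℝ) : ℂ)) *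
      (2*((Real.pi : ℝ) : ℂ) - ((((Complex.log v).im : ℝ) : ℂ)
        - (((Complex.log (1-v)).im : ℝ) : ℂ)))⁻¹) := by
    filter_upwards [(isOpen_lt continuous_const Complex.continuous_im).mem_nhds hw] with v hv
    have hv : 0 < v.im := hv
    simp only [s]
    rw [div_eq_mul_inv, arg_div_upper_s17 hv, ← Complex.log_im v, ← Complex.log_im (1-v)]
    push_cast
    ring
  -- θ facts
  have hq := im_div_pos hw
  have hq2 : Complex.arg (w/(1-w)) < Real.pi := Complex.arg_lt_pi_iff.2 (Or.inr (ne_of_gt hq))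
  have hθpos : 0 < θ := by simp only [θ]; linarith
  have hθc : ((θ:ℝ):ℂ) = 2*((Real.pi:ℝ):ℂ) - ((((Complex.log w).im : ℝ):ℂ)
      - (((Complex.log (1-w)).im : ℝ):ℂ)) := by
    simp only [θ]
    rw [arg_div_upper_s17 hw, ← Complex.log_im w, ← Complex.log_im (1-w)]
    push_cast
    ring
  have hθne : ((θ:ℝ):ℂ) ≠ 0 := by
    simpa using ne_of_gt hθpos
  have hden_ne : 2*((Real.pi:ℝ):ℂ) - ((((Complex.log w).im:ℝ):ℂ)
      - (((Complex.log (1-w)).im:ℝ):ℂ)) ≠ 0 := hθc ▸ hθne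
  have hπne : ((Real.pi:ℝ):ℂ) ≠ 0 := by
    simpa using Real.pi_ne_zero
  -- differentiability
  have hdF : DifferentiableAt ℝ (fun v => ((1/Real.pi : ℝ) : ℂ) *
      ((((Complex.log v).im : ℝ) : ℂ) * (((Complex.log (1-v)).re : ℝ) : ℂ)
        + (((dilog v).im : ℝ) : ℂ))
      - ((((Complex.log v).re : ℝ) : ℂ) + (((Complex.log (1-v)).re : ℝ) : ℂ))) w :=
    (((hdA.mul hdB).add hdE).const_mul _).sub (hdC.add hdB)
  have hdY : DifferentiableAt ℝ Y w := hdF.congr_of_eventuallyEq hYF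
  have hdG : DifferentiableAt ℝ (fun v => (((Real.pi : ℝ) : ℂ) - (((Complex.log v).im : ℝ) : ℂ)) *
      (2*((Real.pi : ℝ) : ℂ) - ((((Complex.log v).im : ℝ) : ℂ)
        - (((Complex.log (1-v)).im : ℝ) : ℂ)))⁻¹) w :=
    (hdA.const_sub _).mul (((hdA.sub hdD).const_sub _).inv hden_ne)
  have hdS : DifferentiableAt ℝ s w := hdG.congr_of_eventuallyEq hsG
  refine ⟨hdY, hdS, ?_⟩
  rw [wirt_congr hYF, wirtY ((1/Real.pi:ℝ):ℂ) hdA hdB hdE hdC,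
      wirt_congr hsG, wirtS ((Real.pi:ℝ):ℂ) hdA hdD hden_ne,
      wA, wB, wC, wD, wE]
  rw [← hθc]
  have hiP' : ((1/Real.pi:ℝ):ℂ) * ((Real.pi:ℝ):ℂ) = 1 := by
    rw [← Complex.ofReal_mul, one_div_mul_cancel Real.pi_ne_zero, Complex.ofReal_one]
  exact final_algebra _ _ _ _ _ _ _ _ hw0 h1w0 hθne hiP' hθc
end
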